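/- arXiv:1906.10340 — 10 statements merged into one kernel-verified Lean document; each statement's English description precedes it below -/
import Mathlib

section
/- Let p ≥ 2 be a real number, m a positive integer, r ∈ ℝ^m with r ≥ 0 entrywise, s ≥ 0, and x, δ ∈ ℝ^m. Then 2^{-p} · h_p(r + s|x|^{p-2}, s, δ) ≤ h_p(r, s, x + δ) − h_p(r, s, x) − δᵀ∇_x h_p(r, s, x) ≤ 2^{2p} · h_p(r + s|x|^{p-2}, s, δ), where |x|^{p-2} denotes the vector with entries |x_i|^{p-2} and the gradient has entries (∇_x h_p(r, s, x))_i = 2 r_i x_i + p s |x_i|^{p-2} x_i. -/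
/-!
Coordinatewise the `r`-part of the gap is exactly `r_i δ_i²`, so everything reduces to bounding
the Bregman divergence `D(a, b) = |a + b|^p - |a|^p - p |a|^{p-2} a b` of `f = |·|^p` from both
sides by multiples of `|a|^{p-2} b² + |b|^p`. Since `f` is convex with `f'(t) = p |t|^{p-2} t`,
two tangent-line inequalities give
`(b/2) (f'(a + b/2) - f'(a)) ≤ D(a, b) ≤ b (f'(a + b) - f'(a))`.
By the symmetry `D(-a, -b) = D(a, b)` we may take `a ≥ 0`, and as long as `a + b ≥ 0` these
outer bounds only involve the convex power `t ↦ t^{p-1}` on `[0, ∞)`, whose superadditivity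
and tangent lines give the estimates. When `a + b < 0` the segment crosses `0` and one computes
directly.
-/

open Finset

/-- The `r`-smoothed `s`-weighted `p`-norm:
`h_p(r, s, x) = Σ_i (r_i x_i^2 + s |x_i|^p)`. -/
noncomputable def hP (p : ℝ) {m : ℕ} (r : Fin m → ℝ) (s : ℝ) (x : Fin m → ℝ) : ℝ :=
  ∑ i, (r i * x i ^ 2 + s * |x i| ^ p)

/-- The gradient of `h_p(r, s, ·)` at `x`: its `i`-th entry is
`2 r_i x_i + p s |x_i|^{p-2} x_i`. -/
noncomputable def gradHP (p : ℝ) {m : ℕ} (r : Fin m → ℝ) (s : ℝ) (x : Fin m → ℝ) :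
    Fin m → ℝ :=
  fun i => 2 * r i * x i + p * s * |x i| ^ (p - 2) * x i

open Real Set

theorem ConvexOn.add_mul_sub_le_of_hasDerivAt {S : Set ℝ} {f : ℝ → ℝ} {f' x y : ℝ}
    (hf : ConvexOn ℝ S f) (hx : x ∈ S) (hy : y ∈ S) (hd : HasDerivAt f f' x) :
    f x + f' * (y - x) ≤ f y := by
  rcases lt_trichotomy x y with hxy | rfl | hxy
  · have h := hf.le_slope_of_hasDerivAt hx hy hxy hd
    rw [slope_def_field, le_div_iff₀ (sub_pos.2 hxy)] at h
    linarith
  · simp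
  · have h := hf.slope_le_of_hasDerivAt hy hx hxy hd
    rw [slope_def_field, div_le_iff₀ (sub_pos.2 hxy)] at h
    linarith

theorem ConvexOn.half_mul_sub_le_sub_sub_mul {f f' : ℝ → ℝ} (hf : ConvexOn ℝ univ f)
    (hd : ∀ x, HasDerivAt f (f' x) x) (a b : ℝ) :
    b / 2 * (f' (a + b / 2) - f' a) ≤ f (a + b) - f a - f' a * b := by
  have hmid := hf.add_mul_sub_le_of_hasDerivAt (mem_univ _) (mem_univ (a + b)) (hd (a + b / 2))
  have hleft := hf.add_mul_sub_le_of_hasDerivAt (mem_univ _) (mem_univ (a + b / 2)) (hd a)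
  linarith

theorem ConvexOn.sub_sub_mul_le_mul_sub {f f' : ℝ → ℝ} (hf : ConvexOn ℝ univ f)
    (hd : ∀ x, HasDerivAt f (f' x) x) (a b : ℝ) :
    f (a + b) - f a - f' a * b ≤ b * (f' (a + b) - f' a) := by
  have h := hf.add_mul_sub_le_of_hasDerivAt (mem_univ _) (mem_univ a) (hd (a + b))
  linarith

theorem convexOn_abs_rpow {p : ℝ} (hp : 1 ≤ p) : ConvexOn ℝ univ fun x : ℝ => |x| ^ p := by
  refine ⟨convex_univ, fun x _ y _ a b ha hb hab => ?_⟩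
  calc |a • x + b • y| ^ p ≤ (a • |x| + b • |y|) ^ p := by
        gcongr
        simpa [abs_mul, abs_of_nonneg ha, abs_of_nonneg hb] using abs_add_le (a * x) (b * y)
    _ ≤ a • |x| ^ p + b • |y| ^ p :=
        (convexOn_rpow hp).2 (abs_nonneg x) (abs_nonneg y) ha hb hab

namespace Real

variable {p u v : ℝ}

theorem rpow_add_le_mul_rpow_add_rpow (hu : 0 ≤ u) (hv : 0 ≤ v) (hp : 1 ≤ p) :
    (u + v) ^ p ≤ 2 ^ (p - 1) * (u ^ p + v ^ p) := by
  lift u to NNReal using hu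
  lift v to NNReal using hv
  exact_mod_cast NNReal.rpow_add_le_mul_rpow_add_rpow u v hp

theorem add_rpow_le_two_rpow_mul_rpow_add_rpow (hu : 0 ≤ u) (hv : 0 ≤ v) (hp : 0 ≤ p) :
    (u + v) ^ p ≤ 2 ^ p * (u ^ p + v ^ p) := by
  calc (u + v) ^ p ≤ (2 * max u v) ^ p :=
        rpow_le_rpow (by positivity) (by linarith [le_max_left u v, le_max_right u v]) hp
    _ = 2 ^ p * max u v ^ p := mul_rpow zero_le_two (le_max_of_le_left hu)
    _ ≤ 2 ^ p * (u ^ p + v ^ p) := by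
        gcongr
        rcases le_total u v with h | h
        · rw [max_eq_right h]; linarith [rpow_nonneg hu p]
        · rw [max_eq_left h]; linarith [rpow_nonneg hv p]

theorem rpow_add_mul_sub_le_rpow (hu : 0 ≤ u) (hv : 0 ≤ v) (hp : 1 ≤ p) :
    u ^ p + p * u ^ (p - 1) * (v - u) ≤ v ^ p :=
  (convexOn_rpow hp).add_mul_sub_le_of_hasDerivAt hu hv (hasDerivAt_rpow_const (Or.inr hp))

theorem rpow_sub_one_mul_self (hu : 0 ≤ u) (hp : p ≠ 0) : u ^ (p - 1) * u = u ^ p := by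
  rw [← rpow_add_one' hu (by simpa using hp), sub_add_cancel]

theorem abs_rpow_sub_two_mul_self_of_nonneg (hp : p ≠ 1) (hu : 0 ≤ u) :
    |u| ^ (p - 2) * u = u ^ (p - 1) := by
  rw [abs_of_nonneg hu, ← rpow_sub_one_mul_self hu (sub_ne_zero.2 hp)]
  ring_nf

theorem abs_rpow_sub_two_mul_sq (hp : p ≠ 0) (u : ℝ) : |u| ^ (p - 2) * u ^ 2 = |u| ^ p := by
  rw [← sq_abs, ← rpow_natCast, ← rpow_add' (abs_nonneg u) (by simpa using hp)]
  norm_num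

theorem two_rpow_one_sub : (2 : ℝ) ^ (1 - p) = 2 * 2 ^ (-p) := by
  rw [sub_eq_add_neg, rpow_add two_pos, rpow_one]

theorem mul_sub_one_mul_two_rpow_le (hp : 2 ≤ p) :
    p * (p - 1) * 2 ^ (p - 2) ≤ (2 : ℝ) ^ (2 * p) := by
  have hbern := one_add_mul_self_le_rpow_one_add (by norm_num : (-1 : ℝ) ≤ 1)
    (by linarith : 1 ≤ p / 2)
  rw [mul_one, one_add_one_eq_two] at hbern
  have hsq : (2 : ℝ) ^ (p / 2) * 2 ^ (p / 2) = 2 ^ p := by rw [← rpow_add two_pos]; ring_nf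
  have h4 : (2 : ℝ) ^ (p - 2) * 4 = 2 ^ p := by rw [rpow_sub two_pos]; norm_num
  have h2p : (2 : ℝ) ^ (2 * p) = 2 ^ p * 2 ^ p := by rw [← rpow_add two_pos]; ring_nf
  have hpos : 0 < (2 : ℝ) ^ (p - 2) := by positivity
  nlinarith [mul_le_mul hbern hbern (by linarith) (by positivity)]

theorem abs_sub_rpow_le_mul_sub_rpow (hp : 2 ≤ p) (hu : 0 ≤ u) (hv : 0 ≤ v) :
    |v - u| ^ p ≤ (v - u) * (v ^ (p - 1) - u ^ (p - 1)) := by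
  wlog huv : u ≤ v generalizing u v
  · have h := this hv hu (le_of_not_ge huv)
    rw [abs_sub_comm]
    linarith
  have hvu : 0 ≤ v - u := sub_nonneg.2 huv
  have hsuper := add_rpow_le_rpow_add hu hvu (by linarith : 1 ≤ p - 1)
  rw [add_sub_cancel] at hsuper
  rw [abs_of_nonneg hvu, ← rpow_sub_one_mul_self hvu (by linarith), mul_comm]
  exact mul_le_mul_of_nonneg_left (by linarith) hvu

theorem mul_min_rpow_mul_sq_le_mul_sub_rpow (hp : 2 ≤ p) (hu : 0 ≤ u) (hv : 0 ≤ v) :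
    (p - 1) * min u v ^ (p - 2) * (v - u) ^ 2 ≤ (v - u) * (v ^ (p - 1) - u ^ (p - 1)) := by
  wlog huv : u ≤ v generalizing u v
  · have h := this hv hu (le_of_not_ge huv)
    rw [min_comm]
    linarith
  have htangent := rpow_add_mul_sub_le_rpow hu hv (by linarith : 1 ≤ p - 1)
  rw [show p - 1 - 1 = p - 2 by ring] at htangent
  rw [min_eq_left huv]
  nlinarith [mul_le_mul_of_nonneg_left htangent (sub_nonneg.2 huv)]

theorem mul_sub_rpow_le_mul_max_rpow_mul_sq (hp : 2 ≤ p) (hu : 0 ≤ u) (hv : 0 ≤ v) :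
    (v - u) * (v ^ (p - 1) - u ^ (p - 1)) ≤ (p - 1) * max u v ^ (p - 2) * (v - u) ^ 2 := by
  wlog huv : u ≤ v generalizing u v
  · have h := this hv hu (le_of_not_ge huv)
    rw [max_comm]
    linarith
  have htangent := rpow_add_mul_sub_le_rpow hv hu (by linarith : 1 ≤ p - 1)
  rw [show p - 1 - 1 = p - 2 by ring] at htangent
  rw [max_eq_right huv]
  nlinarith [mul_le_mul_of_nonneg_left htangent (sub_nonneg.2 huv)]

end Real

noncomputable def absRpowBregman (p a b : ℝ) : ℝ :=
  |a + b| ^ p - |a| ^ p - p * |a| ^ (p - 2) * a * b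

section absRpowBregman

variable {p : ℝ}

theorem absRpowBregman_neg_neg (p a b : ℝ) :
    absRpowBregman p (-a) (-b) = absRpowBregman p a b := by
  simp only [absRpowBregman, ← neg_add, abs_neg]
  ring

theorem half_mul_sub_le_absRpowBregman (hp : 1 < p) (a b : ℝ) :
    p * (b / 2) * (|a + b / 2| ^ (p - 2) * (a + b / 2) - |a| ^ (p - 2) * a) ≤
      absRpowBregman p a b := by
  have h := (convexOn_abs_rpow hp.le).half_mul_sub_le_sub_sub_mul
    (fun x => hasDerivAt_abs_rpow x hp) a b
  simp only [absRpowBregman]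
  linarith

theorem absRpowBregman_le_mul_sub (hp : 1 < p) (a b : ℝ) :
    absRpowBregman p a b ≤ p * b * (|a + b| ^ (p - 2) * (a + b) - |a| ^ (p - 2) * a) := by
  have h := (convexOn_abs_rpow hp.le).sub_sub_mul_le_mul_sub
    (fun x => hasDerivAt_abs_rpow x hp) a b
  simp only [absRpowBregman]
  linarith

theorem two_rpow_mul_abs_rpow_le_absRpowBregman_of_nonneg (hp : 2 ≤ p) {a : ℝ} (ha : 0 ≤ a)
    (b : ℝ) : 2 ^ (1 - p) * |b| ^ p ≤ absRpowBregman p a b := by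
  have hp1 : p ≠ 1 := by linarith
  rcases le_or_gt 0 (a + b) with hab | hab
  · have hmid : 0 ≤ a + b / 2 := by linarith
    have hhalf := half_mul_sub_le_absRpowBregman (show 1 < p by linarith) a b
    rw [abs_rpow_sub_two_mul_self_of_nonneg hp1 hmid,
      abs_rpow_sub_two_mul_self_of_nonneg hp1 ha] at hhalf
    have hmono := abs_sub_rpow_le_mul_sub_rpow hp ha hmid
    rw [add_sub_cancel_left, abs_div, abs_two, div_rpow (abs_nonneg b) zero_le_two,
      div_eq_mul_inv _ ((2 : ℝ) ^ p), ← rpow_neg zero_le_two] at hmono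
    calc 2 ^ (1 - p) * |b| ^ p = 2 * (|b| ^ p * 2 ^ (-p)) := by rw [two_rpow_one_sub]; ring
      _ ≤ p * (b / 2 * ((a + b / 2) ^ (p - 1) - a ^ (p - 1))) :=
        mul_le_mul hp hmono (by positivity) (by linarith)
      _ ≤ absRpowBregman p a b := by linarith
  · have hcross : |a + b| ^ p + a ^ p ≤ absRpowBregman p a b := by
      have hpow := rpow_sub_one_mul_self ha (by linarith : p ≠ 0)
      have hnonneg : 0 ≤ a ^ (p - 1) := rpow_nonneg ha _
      rw [absRpowBregman, mul_assoc p, abs_rpow_sub_two_mul_self_of_nonneg hp1 ha,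
        abs_of_nonneg ha, abs_of_neg hab]
      nlinarith [mul_nonneg hnonneg ha, mul_nonneg hnonneg (neg_nonneg.2 hab.le)]
    have hconv := rpow_add_le_mul_rpow_add_rpow (abs_nonneg (a + b)) ha (by linarith : 1 ≤ p)
    rw [show |a + b| + a = |b| by rw [abs_of_neg hab, abs_of_neg (by linarith : b < 0)]; ring]
      at hconv
    have hinv : (2 : ℝ) ^ (1 - p) * 2 ^ (p - 1) = 1 := by
      rw [← rpow_add two_pos]; norm_num
    calc 2 ^ (1 - p) * |b| ^ p ≤ 2 ^ (1 - p) * (2 ^ (p - 1) * (|a + b| ^ p + a ^ p)) := by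
          gcongr
      _ = |a + b| ^ p + a ^ p := by rw [← mul_assoc, hinv, one_mul]
      _ ≤ absRpowBregman p a b := hcross

theorem two_rpow_mul_abs_rpow_mul_sq_le_absRpowBregman_of_nonneg (hp : 2 ≤ p) {a : ℝ}
    (ha : 0 ≤ a) (b : ℝ) : 2 ^ (1 - p) * (|a| ^ (p - 2) * b ^ 2) ≤ absRpowBregman p a b := by
  rcases le_or_gt a |b| with hab | hab
  · calc 2 ^ (1 - p) * (|a| ^ (p - 2) * b ^ 2) ≤ 2 ^ (1 - p) * (|b| ^ (p - 2) * b ^ 2) := by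
          rw [abs_of_nonneg ha]; gcongr
      _ = 2 ^ (1 - p) * |b| ^ p := by rw [abs_rpow_sub_two_mul_sq (by linarith)]
      _ ≤ absRpowBregman p a b := two_rpow_mul_abs_rpow_le_absRpowBregman_of_nonneg hp ha b
  have hp1 : p ≠ 1 := by linarith
  have hmid : a / 2 ≤ a + b / 2 := by linarith [neg_abs_le b]
  have hhalf := half_mul_sub_le_absRpowBregman (show 1 < p by linarith) a b
  rw [abs_rpow_sub_two_mul_self_of_nonneg hp1 (by linarith),
    abs_rpow_sub_two_mul_self_of_nonneg hp1 ha] at hhalf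
  have hmono := mul_min_rpow_mul_sq_le_mul_sub_rpow hp ha (by linarith : 0 ≤ a + b / 2)
  rw [add_sub_cancel_left] at hmono
  have hmin : (a / 2) ^ (p - 2) ≤ min a (a + b / 2) ^ (p - 2) :=
    rpow_le_rpow (by linarith) (le_min (by linarith) hmid) (by linarith)
  have hscale : 2 ^ (1 - p) * (|a| ^ (p - 2) * b ^ 2) = 2 * (a / 2) ^ (p - 2) * (b / 2) ^ 2 := by
    rw [abs_of_nonneg ha, div_rpow ha zero_le_two, rpow_sub two_pos, rpow_sub two_pos]
    field_simp
    ring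
  calc 2 ^ (1 - p) * (|a| ^ (p - 2) * b ^ 2) = 2 * (a / 2) ^ (p - 2) * (b / 2) ^ 2 := hscale
    _ ≤ p * (p - 1) * min a (a + b / 2) ^ (p - 2) * (b / 2) ^ 2 := by
        have hpp : 2 ≤ p * (p - 1) := by nlinarith
        gcongr
    _ ≤ p * (b / 2) * ((a + b / 2) ^ (p - 1) - a ^ (p - 1)) := by
        linarith [mul_le_mul_of_nonneg_left hmono (by linarith : (0 : ℝ) ≤ p)]
    _ ≤ absRpowBregman p a b := hhalf

theorem absRpowBregman_le_mul_add_abs_rpow_mul_sq_of_nonneg (hp : 2 ≤ p) {a : ℝ} (ha : 0 ≤ a)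
    (b : ℝ) : absRpowBregman p a b ≤ p * ((p - 1) * (a + |b|) ^ (p - 2) * b ^ 2) := by
  refine (absRpowBregman_le_mul_sub (by linarith) a b).trans ?_
  rw [mul_assoc]
  refine mul_le_mul_of_nonneg_left ?_ (by linarith)
  rcases le_or_gt 0 (a + b) with hab | hab
  · have hp1 : p ≠ 1 := by linarith
    rw [abs_rpow_sub_two_mul_self_of_nonneg hp1 hab, abs_rpow_sub_two_mul_self_of_nonneg hp1 ha]
    have hmono := mul_sub_rpow_le_mul_max_rpow_mul_sq hp ha hab
    rw [add_sub_cancel_left] at hmono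
    have hmax : max a (a + b) ^ (p - 2) ≤ (a + |b|) ^ (p - 2) :=
      rpow_le_rpow (le_max_of_le_left ha) (max_le (by linarith [abs_nonneg b])
        (by linarith [le_abs_self b])) (by linarith)
    refine hmono.trans ?_
    gcongr
    linarith
  · -- both `|a + b|` and `a` are at most `a + |b|`, and they add up to `|b|`
    have hM : 0 ≤ (a + |b|) ^ (p - 2) := by positivity
    have hc : |a + b| ^ (p - 2) ≤ (a + |b|) ^ (p - 2) :=
      rpow_le_rpow (abs_nonneg _)
        (by rw [abs_of_neg hab, abs_of_neg (by linarith : b < 0)]; linarith) (by linarith)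
    have ha' : |a| ^ (p - 2) ≤ (a + |b|) ^ (p - 2) :=
      rpow_le_rpow (abs_nonneg _) (by rw [abs_of_nonneg ha]; linarith [abs_nonneg b])
        (by linarith)
    rw [abs_of_neg hab] at hc ⊢
    rw [abs_of_nonneg ha] at ha' ⊢
    nlinarith [mul_le_mul_of_nonneg_right hc (by linarith : 0 ≤ -(a + b)),
      mul_le_mul_of_nonneg_right ha' ha, mul_nonneg hM (sq_nonneg b)]

theorem two_rpow_neg_mul_le_absRpowBregman (hp : 2 ≤ p) (a b : ℝ) :
    2 ^ (-p) * (|a| ^ (p - 2) * b ^ 2 + |b| ^ p) ≤ absRpowBregman p a b := by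
  wlog ha : 0 ≤ a generalizing a b
  · simpa [← absRpowBregman_neg_neg p a b] using this (-a) (-b) (by linarith)
  have hsq := two_rpow_mul_abs_rpow_mul_sq_le_absRpowBregman_of_nonneg hp ha b
  have hpow := two_rpow_mul_abs_rpow_le_absRpowBregman_of_nonneg hp ha b
  rw [two_rpow_one_sub] at hsq hpow
  linarith

theorem absRpowBregman_le_two_rpow_mul (hp : 2 ≤ p) (a b : ℝ) :
    absRpowBregman p a b ≤ 2 ^ (2 * p) * (|a| ^ (p - 2) * b ^ 2 + |b| ^ p) := by
  wlog ha : 0 ≤ a generalizing a b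
  · simpa [← absRpowBregman_neg_neg p a b] using this (-a) (-b) (by linarith)
  calc absRpowBregman p a b ≤ p * ((p - 1) * (a + |b|) ^ (p - 2) * b ^ 2) :=
        absRpowBregman_le_mul_add_abs_rpow_mul_sq_of_nonneg hp ha b
    _ ≤ p * ((p - 1) * (2 ^ (p - 2) * (a ^ (p - 2) + |b| ^ (p - 2))) * b ^ 2) := by
        have := add_rpow_le_two_rpow_mul_rpow_add_rpow ha (abs_nonneg b) (by linarith : 0 ≤ p - 2)
        have hp0 : 0 ≤ p - 1 := by linarith
        gcongr
    _ = p * (p - 1) * 2 ^ (p - 2) * (|a| ^ (p - 2) * b ^ 2 + |b| ^ (p - 2) * b ^ 2) := by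
        rw [abs_of_nonneg ha]; ring
    _ ≤ 2 ^ (2 * p) * (|a| ^ (p - 2) * b ^ 2 + |b| ^ p) := by
        rw [abs_rpow_sub_two_mul_sq (by linarith)]
        gcongr
        exact mul_sub_one_mul_two_rpow_le hp

end absRpowBregman

theorem hP_add_sub_hP_sub_sum_mul_gradHP (p : ℝ) {m : ℕ} (r : Fin m → ℝ) (s : ℝ)
    (x δ : Fin m → ℝ) :
    hP p r s (x + δ) - hP p r s x - ∑ i, δ i * gradHP p r s x i =
      ∑ i, (r i * δ i ^ 2 + s * absRpowBregman p (x i) (δ i)) := by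
  simp only [hP, gradHP, absRpowBregman, Pi.add_apply, ← sum_sub_distrib]
  congr 1 with i
  ring

theorem smoothed_p_norm_second_order_approx_general (p : ℝ) (hp : 2 ≤ p) (m : ℕ)
    (r : Fin m → ℝ) (hr : ∀ i, 0 ≤ r i) (s : ℝ) (hs : 0 ≤ s) (x δ : Fin m → ℝ) :
    (2 : ℝ) ^ (-p) * hP p (fun i => r i + s * |x i| ^ (p - 2)) s δ ≤
        hP p r s (x + δ) - hP p r s x - ∑ i, δ i * gradHP p r s x i ∧
      hP p r s (x + δ) - hP p r s x - ∑ i, δ i * gradHP p r s x i ≤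
        (2 : ℝ) ^ (2 * p) * hP p (fun i => r i + s * |x i| ^ (p - 2)) s δ := by
  have hsmall : (2 : ℝ) ^ (-p) ≤ 1 := rpow_le_one_of_one_le_of_nonpos one_le_two (by linarith)
  have hlarge : (1 : ℝ) ≤ 2 ^ (2 * p) := one_le_rpow one_le_two (by linarith)
  have hrδ : ∀ i, 0 ≤ r i * δ i ^ 2 := fun i => mul_nonneg (hr i) (sq_nonneg _)
  rw [hP_add_sub_hP_sub_sum_mul_gradHP, hP, mul_sum, mul_sum]
  refine ⟨sum_le_sum fun i _ => ?_, sum_le_sum fun i _ => ?_⟩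
  · calc 2 ^ (-p) * ((r i + s * |x i| ^ (p - 2)) * δ i ^ 2 + s * |δ i| ^ p)
        = 2 ^ (-p) * (r i * δ i ^ 2) +
            s * (2 ^ (-p) * (|x i| ^ (p - 2) * δ i ^ 2 + |δ i| ^ p)) := by
          ring
      _ ≤ r i * δ i ^ 2 + s * absRpowBregman p (x i) (δ i) :=
          add_le_add (mul_le_of_le_one_left (hrδ i) hsmall)
            (mul_le_mul_of_nonneg_left (two_rpow_neg_mul_le_absRpowBregman hp _ _) hs)
  · calc r i * δ i ^ 2 + s * absRpowBregman p (x i) (δ i)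
        ≤ 2 ^ (2 * p) * (r i * δ i ^ 2) +
            s * (2 ^ (2 * p) * (|x i| ^ (p - 2) * δ i ^ 2 + |δ i| ^ p)) :=
          add_le_add (le_mul_of_one_le_left (hrδ i) hlarge)
            (mul_le_mul_of_nonneg_left (absRpowBregman_le_two_rpow_mul hp _ _) hs)
      _ = 2 ^ (2 * p) * ((r i + s * |x i| ^ (p - 2)) * δ i ^ 2 + s * |δ i| ^ p) := by ring

/-- Second-order approximation of the smoothed `p`-norm (Lemma 3.1 of Adil et al.):
`2^{-p} h_p(r + s|x|^{p-2}, s, δ) ≤ h_p(r,s,x+δ) - h_p(r,s,x) - δᵀ∇ₓh_p(r,s,x)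
  ≤ 2^{2p} h_p(r + s|x|^{p-2}, s, δ)`. -/
theorem smoothed_p_norm_second_order_approx (p : ℝ) (hp : 2 ≤ p) (m : ℕ) (hm : 0 < m)
    (r : Fin m → ℝ) (hr : ∀ i, 0 ≤ r i) (s : ℝ) (hs : 0 ≤ s) (x δ : Fin m → ℝ) :
    (2 : ℝ) ^ (-p) * hP p (fun i => r i + s * |x i| ^ (p - 2)) s δ ≤
        hP p r s (x + δ) - hP p r s x - ∑ i, δ i * gradHP p r s x i ∧
      hP p r s (x + δ) - hP p r s x - ∑ i, δ i * gradHP p r s x i ≤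
        (2 : ℝ) ^ (2 * p) * hP p (fun i => r i + s * |x i| ^ (p - 2)) s δ :=
  smoothed_p_norm_second_order_approx_general p hp m r hr s hs x δ
end

section
/- For every real δ and every real p ≥ 1, |1 + δ|^p − 1 − pδ ≤ p·2^{p-1}·(δ^2 + |δ|^p). -/
/-!
For `1 + δ > 0` this is the convexity of `t ↦ t ^ p`: the tangent line at `1 + δ` lies below the
graph at `1`, so `(1 + δ) ^ p - 1 - p δ ≤ p δ ((1 + δ) ^ (p - 1) - 1)`, and the difference of
derivatives is bounded by `2 ^ (p - 1) (|δ| + |δ| ^ (p - 1))`. For `δ ≤ -1` every term is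
dominated crudely, since `|1 + δ| ≤ |δ|` and `|δ| ≤ δ ^ 2`.
-/

namespace Real

theorem rpow_add_mul_rpow_sub_one_mul_sub_le_rpow {y z p : ℝ} (hy : 0 < y) (hz : 0 ≤ z)
    (hp : 1 ≤ p) : y ^ p + p * y ^ (p - 1) * (z - y) ≤ z ^ p := by
  have hbern :=
    one_add_mul_self_le_rpow_one_add (s := z / y - 1) (by linarith [div_nonneg hz hy.le]) hp
  rw [add_sub_cancel, div_rpow hz hy.le, le_div_iff₀ (rpow_pos_of_pos hy p)] at hbern
  have hyp : y ^ p = y ^ (p - 1) * y := by rw [rpow_sub_one hy.ne', div_mul_cancel₀ _ hy.ne']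
  calc y ^ p + p * y ^ (p - 1) * (z - y) = (1 + p * (z / y - 1)) * y ^ p := by
        rw [hyp]; field_simp
    _ ≤ z ^ p := hbern

theorem one_add_rpow_le_one_add_two_rpow_mul {δ q : ℝ} (hδ : 0 ≤ δ) (hq : 0 ≤ q) :
    (1 + δ) ^ q ≤ 1 + 2 ^ q * (δ + δ ^ q) := by
  have h2q : 1 ≤ (2 : ℝ) ^ q := one_le_rpow one_le_two hq
  have hδq : 0 ≤ δ ^ q := rpow_nonneg hδ q
  rcases le_total q 1 with hq1 | hq1
  · have hsub := rpow_add_le_add_rpow zero_le_one hδ hq hq1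
    rw [one_rpow] at hsub
    nlinarith
  rcases le_total δ 1 with hδ1 | hδ1
  · -- `t ↦ t ^ q` lies below its chord between `1` and `2`
    have hchord := (convexOn_rpow hq1).2 (Set.mem_Ici.2 zero_le_one)
      (Set.mem_Ici.2 zero_le_two) (sub_nonneg.2 hδ1) hδ (sub_add_cancel 1 δ)
    simp only [smul_eq_mul, one_rpow, mul_one] at hchord
    rw [show 1 - δ + δ * 2 = 1 + δ by ring] at hchord
    nlinarith
  · calc (1 + δ) ^ q ≤ (2 * δ) ^ q := rpow_le_rpow (by linarith) (by linarith) hq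
      _ = 2 ^ q * δ ^ q := mul_rpow zero_le_two hδ
      _ ≤ 1 + 2 ^ q * (δ + δ ^ q) := by nlinarith

theorem one_le_two_rpow_mul_add_one_sub_rpow {x q : ℝ} (hx : 0 ≤ x) (hx1 : x ≤ 1)
    (hq : 0 ≤ q) : 1 ≤ 2 ^ q * x + (1 - x) ^ q := by
  rcases le_total q 1 with hq1 | hq1
  · have := self_le_rpow_of_le_one (sub_nonneg.2 hx1) (by linarith) hq1
    nlinarith [one_le_rpow one_le_two hq]
  · have hbern := one_add_mul_self_le_rpow_one_add (s := -x) (by linarith) hq1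
    have htwo := one_add_mul_self_le_rpow_one_add (s := 1) (by norm_num) hq1
    norm_num at htwo
    rw [← sub_eq_add_neg] at hbern
    nlinarith

theorem mul_one_add_rpow_sub_one_le {δ q : ℝ} (hδ : -1 ≤ δ) (hq : 0 ≤ q) :
    δ * ((1 + δ) ^ q - 1) ≤ 2 ^ q * (δ ^ 2 + |δ| ^ (q + 1)) := by
  have hδq : 0 ≤ |δ| ^ (q + 1) := rpow_nonneg (abs_nonneg δ) _
  rcases le_total 0 δ with hδ0 | hδ0
  · have hsplit : |δ| ^ (q + 1) = δ * δ ^ q := by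
      rw [abs_of_nonneg hδ0, rpow_add_one' hδ0 (by linarith), mul_comm]
    have := one_add_rpow_le_one_add_two_rpow_mul hδ0 hq
    rw [hsplit]
    nlinarith
  · have := one_le_two_rpow_mul_add_one_sub_rpow (neg_nonneg.2 hδ0) (by linarith) hq
    rw [sub_neg_eq_add] at this
    nlinarith [mul_le_mul_of_nonneg_left this (neg_nonneg.2 hδ0),
      mul_nonneg (rpow_nonneg zero_le_two q) hδq]

theorem abs_one_add_rpow_sub_sub_le_of_le_neg_one {δ p : ℝ} (hδ : δ ≤ -1) (hp : 1 ≤ p) :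
    |1 + δ| ^ p - 1 - p * δ ≤ p * 2 ^ (p - 1) * (δ ^ 2 + |δ| ^ p) := by
  have habs : |1 + δ| ≤ |δ| := by
    rw [abs_of_nonpos (by linarith), abs_of_neg (by linarith)]; linarith
  have hpow : |1 + δ| ^ p ≤ |δ| ^ p := rpow_le_rpow (abs_nonneg _) habs (by linarith)
  have htwo : 1 ≤ (2 : ℝ) ^ (p - 1) := one_le_rpow one_le_two (by linarith)
  have hconst : 1 ≤ p * 2 ^ (p - 1) := one_le_mul_of_one_le_of_one_le hp htwo
  have hlin : -p * δ ≤ p * 2 ^ (p - 1) * δ ^ 2 := by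
    calc -p * δ ≤ p * δ ^ 2 := by
          nlinarith [mul_nonneg (by linarith : 0 ≤ p) (by nlinarith : 0 ≤ δ ^ 2 + δ)]
      _ ≤ p * 2 ^ (p - 1) * δ ^ 2 := by gcongr; exact le_mul_of_one_le_right (by linarith) htwo
  nlinarith [mul_le_mul_of_nonneg_right hconst (rpow_nonneg (abs_nonneg δ) p)]

end Real

/-- For every real `δ` and every real `p ≥ 1`,
`|1 + δ|^p − 1 − pδ ≤ p·2^{p-1}·(δ² + |δ|^p)`. -/
theorem one_add_pow_sub_linear_upper_bound (δ p : ℝ) (hp : 1 ≤ p) :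
    |1 + δ| ^ p - 1 - p * δ ≤ p * 2 ^ (p - 1) * (δ ^ 2 + |δ| ^ p) := by
  rcases le_or_gt δ (-1) with hδ | hδ
  · exact Real.abs_one_add_rpow_sub_sub_le_of_le_neg_one hδ hp
  have hy : 0 < 1 + δ := by linarith
  have htangent := Real.rpow_add_mul_rpow_sub_one_mul_sub_le_rpow hy zero_le_one hp
  have hfactor := Real.mul_one_add_rpow_sub_one_le hδ.le (sub_nonneg.2 hp)
  rw [Real.one_rpow] at htangent
  rw [sub_add_cancel] at hfactor
  rw [abs_of_pos hy]
  calc (1 + δ) ^ p - 1 - p * δ ≤ p * (δ * ((1 + δ) ^ (p - 1) - 1)) := by linarith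
    _ ≤ p * (2 ^ (p - 1) * (δ ^ 2 + |δ| ^ p)) :=
        mul_le_mul_of_nonneg_left hfactor (by linarith)
    _ = p * 2 ^ (p - 1) * (δ ^ 2 + |δ| ^ p) := by ring
end

section
/- For every real δ and every real p ≥ 2, |1 + δ|^p − 1 − pδ ≥ 2^{-p}·(δ^2 + |δ|^p). -/
/-!
Write `f(δ) = |1 + δ|^p - 1 - pδ`. Bernoulli's inequality for the exponent `p / 2 ≥ 1`, applied to
`(1 + δ)² = 1 + (2δ + δ²)`, gives `f(δ) ≥ (p/2) δ² ≥ δ²`. The heart of the matter is the second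
bound `f(δ) ≥ 2 |δ/2|^p`: for `|δ| ≤ 2` it follows from the first one since `|δ/2|^p ≤ |δ/2|²`;
for `δ ≤ -1` from convexity of `x ↦ x^p`, as `|δ|/2` is the midpoint of `|1 + δ|` and `1`; and
for `δ ≥ 2` from the tangent bound `(δ + 1)^p ≥ δ^p + p δ^(p-1)`. Averaging the two bounds and
using `2^(-p) ≤ 1/2` gives the claim.
-/

open Real

lemma add_div_two_rpow_le_rpow_add_rpow_div_two {a b p : ℝ} (ha : 0 ≤ a) (hb : 0 ≤ b)
    (hp : 1 ≤ p) : ((a + b) / 2) ^ p ≤ (a ^ p + b ^ p) / 2 := by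
  have h := (convexOn_rpow hp).2 (Set.mem_Ici.2 ha) (Set.mem_Ici.2 hb)
    (by norm_num : (0 : ℝ) ≤ 1 / 2) (by norm_num : (0 : ℝ) ≤ 1 / 2) (add_halves 1)
  simp only [smul_eq_mul] at h
  rw [show (a + b) / 2 = 1 / 2 * a + 1 / 2 * b by ring]
  linarith

lemma rpow_add_mul_rpow_sub_one_le_add_one_rpow {x p : ℝ} (hx : 0 < x) (hp : 1 ≤ p) :
    x ^ p + p * x ^ (p - 1) ≤ (x + 1) ^ p := by
  have bernoulli :=
    one_add_mul_self_le_rpow_one_add (by linarith [inv_pos.2 hx] : (-1 : ℝ) ≤ x⁻¹) hp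
  calc x ^ p + p * x ^ (p - 1) = x ^ p * (1 + p * x⁻¹) := by
        rw [rpow_sub_one hx.ne']; ring
    _ ≤ x ^ p * (1 + x⁻¹) ^ p := by gcongr
    _ = (x + 1) ^ p := by
        rw [← mul_rpow hx.le (by positivity)]; congr 1; field_simp

lemma one_add_mul_add_div_two_mul_sq_le_abs_one_add_rpow (δ : ℝ) {p : ℝ} (hp : 2 ≤ p) :
    1 + p * δ + p / 2 * δ ^ 2 ≤ |1 + δ| ^ p := by
  have bernoulli := one_add_mul_self_le_rpow_one_add
    (by nlinarith [sq_nonneg (1 + δ)] : (-1 : ℝ) ≤ 2 * δ + δ ^ 2)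
    (by linarith : (1 : ℝ) ≤ p / 2)
  calc 1 + p * δ + p / 2 * δ ^ 2 = 1 + p / 2 * (2 * δ + δ ^ 2) := by ring
    _ ≤ (1 + (2 * δ + δ ^ 2)) ^ (p / 2) := bernoulli
    _ = (|1 + δ| ^ (2 : ℝ)) ^ (p / 2) := by rw [rpow_two, sq_abs]; ring_nf
    _ = |1 + δ| ^ p := by rw [← rpow_mul (abs_nonneg _)]; ring_nf

lemma two_mul_abs_div_two_rpow_le (δ : ℝ) {p : ℝ} (hp : 2 ≤ p) :
    2 * |δ / 2| ^ p ≤ |1 + δ| ^ p - 1 - p * δ := by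
  rcases le_or_gt δ (-1) with hδ_le | hδ_gt
  · have midpoint : |δ / 2| = (|1 + δ| + 1) / 2 := by
      rw [abs_of_neg (by linarith : δ / 2 < 0), abs_of_nonpos (by linarith : 1 + δ ≤ 0)]; ring
    have convex := add_div_two_rpow_le_rpow_add_rpow_div_two (abs_nonneg (1 + δ)) zero_le_one
      (by linarith : (1 : ℝ) ≤ p)
    rw [one_rpow, ← midpoint] at convex
    nlinarith
  rcases lt_or_ge δ 2 with hδ_lt | hδ_ge
  · have small : |δ / 2| ^ p ≤ |δ / 2| ^ (2 : ℝ) :=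
      rpow_le_rpow_of_exponent_ge' (abs_nonneg _)
        (by rw [abs_le]; constructor <;> linarith) zero_le_two hp
    rw [rpow_two, sq_abs] at small
    nlinarith [one_add_mul_add_div_two_mul_sq_le_abs_one_add_rpow δ hp, sq_nonneg δ]
  · have tangent := rpow_add_mul_rpow_sub_one_le_add_one_rpow (by linarith : 0 < δ)
      (by linarith : (1 : ℝ) ≤ p)
    have four_le : (4 : ℝ) ≤ 2 ^ p := by
      have h := rpow_le_rpow_of_exponent_le one_le_two hp
      rw [rpow_two] at h; linarith
    have half_rpow : 2 * |δ / 2| ^ p ≤ δ ^ p / 2 := by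
      rw [abs_of_pos (by linarith : 0 < δ / 2), div_rpow (by linarith) zero_le_two]
      have := div_le_div_of_nonneg_left (rpow_nonneg (by linarith : 0 ≤ δ) p) four_pos four_le
      linarith
    rw [abs_of_pos (by linarith : 0 < 1 + δ), add_comm 1 δ]
    have one_le_δ : 1 ≤ δ := by linarith
    nlinarith [self_le_rpow_of_one_le one_le_δ (by linarith : 1 ≤ p),
      self_le_rpow_of_one_le one_le_δ (by linarith : 1 ≤ p - 1)]

/-- For every real `δ` and every real `p ≥ 2`,
`|1 + δ|^p − 1 − pδ ≥ 2^{-p}·(δ² + |δ|^p)`. -/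
theorem one_add_pow_sub_linear_lower_bound (δ p : ℝ) (hp : 2 ≤ p) :
    2 ^ (-p) * (δ ^ 2 + |δ| ^ p) ≤ |1 + δ| ^ p - 1 - p * δ := by
  have quadratic := one_add_mul_add_div_two_mul_sq_le_abs_one_add_rpow δ hp
  have power := two_mul_abs_div_two_rpow_le δ hp
  have le_half : (2 : ℝ) ^ (-p) ≤ 1 / 2 := by
    have h := rpow_le_rpow_of_exponent_le one_le_two (by linarith : -p ≤ -1)
    rwa [rpow_neg_one, ← one_div] at h
  have scale : (2 : ℝ) ^ (-p) * |δ| ^ p = |δ / 2| ^ p := by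
    rw [abs_div, abs_two, div_rpow (abs_nonneg δ) zero_le_two, rpow_neg zero_le_two,
      div_eq_mul_inv, mul_comm]
  nlinarith [mul_le_mul_of_nonneg_right le_half (sq_nonneg δ)]
end

section
/- Let p ≥ 2 be real, A a real k × m matrix, b ∈ ℝ^k, g ∈ ℝ^m, r ∈ ℝ^m with r ≥ 0 entrywise, and s ≥ 0. Define obj₁(x) = gᵀx − h_p(r, s, x). Let x₀ satisfy Ax₀ = b, and define g' = 2^p(g − ∇_x h_p(r, s, x)|_{x = x₀}), r' = r + s|x₀|^{p-2}, and obj₂(δ) = (g')ᵀδ − h_p(r', s, δ). Then for any δ with Aδ = 0, the vector x₁ = x₀ + 2^{-3p}δ satisfies Ax₁ = b and obj₁(x₁) ≥ obj₁(x₀) + 2^{-4p}·obj₂(δ). -/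
open Finset Matrix

/-- The objective `obj(x) = gᵀx − h_p(r, s, x)` of a smoothed `p`-norm problem. -/
noncomputable def objFn (p : ℝ) {m : ℕ} (g r : Fin m → ℝ) (s : ℝ) (x : Fin m → ℝ) : ℝ :=
  (∑ i, g i * x i) - hP p r s x

/-!
Coordinatewise, `|a + t|^p ≤ |a|^p + p |a|^(p-2) a t + 2^(2p) (|a|^(p-2) t² + |t|^p)`.
For `|t| ≤ |a|` this is a second-order bound for `(1 + u)^p` on `[-1, 1]`, read off the tangent
and the chord of the convex function `y ↦ y^p`; for `|t| ≥ |a|` every term is dominated by `|t|^p`.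
With `t = ε δᵢ` and `ε = 2^(-3p) ≤ 1` we have `ε^p ≤ ε²` and `2^(2p) ε² = 2^(-4p)`, and summing
over the coordinates gives the claim; the factor `2^p` in `g'` turns `2^(-4p)` back into `ε`.
-/

lemma one_add_le_two_rpow {x : ℝ} (hx : 1 ≤ x) : 1 + x ≤ 2 ^ x := by
  simpa [one_add_one_eq_two] using one_add_mul_self_le_rpow_one_add (s := 1) (by norm_num) hx

/-- Tangent line of the convex function `y ↦ y ^ q` at `1 + u`, evaluated at `1`. -/
lemma one_add_rpow_le_one_add_mul_mul_rpow {q u : ℝ} (hq : 1 ≤ q) (hu : -1 ≤ u) :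
    (1 + u) ^ q ≤ 1 + q * u * (1 + u) ^ (q - 1) := by
  rcases hu.eq_or_lt with rfl | hu
  · rcases hq.eq_or_lt with rfl | hq
    · norm_num
    · rw [add_neg_cancel, Real.zero_rpow (by linarith), Real.zero_rpow (by linarith)]
      norm_num
  have hx : 0 < 1 + u := by linarith
  have hxq : 0 < (1 + u) ^ q := Real.rpow_pos_of_pos hx q
  -- Bernoulli's inequality at `(1 + u)⁻¹ = 1 + (-u / (1 + u))`.
  have hbern := one_add_mul_self_le_rpow_one_add (s := -u / (1 + u))
    (by rw [le_div_iff₀ hx]; linarith) hq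
  rw [show 1 + -u / (1 + u) = (1 + u)⁻¹ by field_simp; ring, Real.inv_rpow hx.le,
    ← mul_le_mul_iff_of_pos_left hxq, mul_inv_cancel₀ hxq.ne'] at hbern
  have hderiv : (1 + u) ^ q * (q * (-u / (1 + u))) = -(q * u * (1 + u) ^ (q - 1)) := by
    rw [Real.rpow_sub hx, Real.rpow_one]
    field_simp
  linarith [mul_add ((1 + u) ^ q) 1 (q * (-u / (1 + u)))]

lemma one_add_rpow_le_one_add_two_rpow_mul {q u : ℝ} (hq : 1 ≤ q) (hu₀ : 0 ≤ u) (hu₁ : u ≤ 1) :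
    (1 + u) ^ q ≤ 1 + (2 ^ q - 1) * u := by
  have h := (convexOn_rpow hq).2 (x := 1) (y := 2) (by norm_num) (by norm_num)
    (sub_nonneg.2 hu₁) hu₀ (by ring)
  simp only [smul_eq_mul, Real.one_rpow] at h
  rw [show (1 - u) * 1 + u * 2 = 1 + u by ring] at h
  linarith

lemma one_add_rpow_le_of_abs_le_one {p u : ℝ} (hp : 2 ≤ p) (hu : |u| ≤ 1) :
    (1 + u) ^ p ≤ 1 + p * u + p * 2 ^ (p - 1) * u ^ 2 := by
  obtain ⟨hu₁, hu₂⟩ := abs_le.1 hu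
  have htangent := one_add_rpow_le_one_add_mul_mul_rpow (by linarith : 1 ≤ p) hu₁
  rcases le_or_gt 0 u with hu₀ | hu₀
  · have hchord := one_add_rpow_le_one_add_two_rpow_mul (by linarith : 1 ≤ p - 1) hu₀ hu₂
    have hprod := mul_le_mul_of_nonneg_left hchord (by positivity : 0 ≤ p * u)
    nlinarith
  · have hbern := one_add_mul_self_le_rpow_one_add hu₁ (by linarith : 1 ≤ p - 1)
    have hlin := mul_le_mul_of_nonpos_left hbern (by nlinarith : p * u ≤ 0)
    have hcoeff : p * (p - 1) * u ^ 2 ≤ p * 2 ^ (p - 1) * u ^ 2 := by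
      have hp₁ := one_add_le_two_rpow (by linarith : 1 ≤ p - 1)
      gcongr
      linarith
    linarith

lemma abs_rpow_sub_two_mul_sq {p : ℝ} (hp : p ≠ 0) (a : ℝ) : |a| ^ (p - 2) * a ^ 2 = |a| ^ p := by
  rw [← sq_abs, ← Real.rpow_natCast, ← Real.rpow_add' (abs_nonneg a) (by simpa using hp)]
  norm_num

lemma abs_add_rpow_le_of_abs_le {p a t : ℝ} (hp : 2 ≤ p) (ht : |t| ≤ |a|) :
    |a + t| ^ p ≤
      |a| ^ p + p * |a| ^ (p - 2) * a * t + p * 2 ^ (p - 1) * (|a| ^ (p - 2) * t ^ 2) := by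
  rcases eq_or_ne a 0 with rfl | ha
  · obtain rfl : t = 0 := by simpa using ht
    simp
  obtain ⟨u, rfl⟩ : ∃ u, t = a * u := ⟨t / a, by field_simp⟩
  have hu : |u| ≤ 1 := by rwa [abs_mul, mul_le_iff_le_one_right (abs_pos.2 ha)] at ht
  have hu₁ : 0 ≤ 1 + u := by linarith [neg_abs_le u]
  have hbound := mul_le_mul_of_nonneg_left (one_add_rpow_le_of_abs_le_one hp hu)
    (Real.rpow_nonneg (abs_nonneg a) p)
  rw [show a + a * u = a * (1 + u) by ring, abs_mul, abs_of_nonneg hu₁,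
    Real.mul_rpow (abs_nonneg a) hu₁]
  rw [← abs_rpow_sub_two_mul_sq (by linarith) a] at hbound ⊢
  linear_combination hbound

lemma abs_add_rpow_le_of_abs_ge {p a t : ℝ} (hp : 2 ≤ p) (ha : |a| ≤ |t|) :
    |a + t| ^ p ≤ |a| ^ p + p * |a| ^ (p - 2) * a * t + (2 ^ p + p) * |t| ^ p := by
  have hsum : |a + t| ^ p ≤ 2 ^ p * |t| ^ p := by
    rw [← Real.mul_rpow zero_le_two (abs_nonneg t)]
    exact Real.rpow_le_rpow (abs_nonneg _) (by linarith [abs_add_le a t]) (by linarith)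
  have hlin : -(p * |a| ^ (p - 2) * a * t) ≤ p * |t| ^ p := by
    have hmono : |a| ^ (p - 2) * |a| ≤ |t| ^ (p - 2) * |t| :=
      mul_le_mul (Real.rpow_le_rpow (abs_nonneg a) ha (by linarith)) ha (abs_nonneg a)
        (Real.rpow_nonneg (abs_nonneg t) _)
    calc -(p * |a| ^ (p - 2) * a * t) ≤ |p * |a| ^ (p - 2) * a * t| := neg_le_abs _
      _ = p * (|a| ^ (p - 2) * |a|) * |t| := by
          rw [abs_mul, abs_mul, abs_mul, abs_of_nonneg (by linarith : 0 ≤ p),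
            abs_of_nonneg (Real.rpow_nonneg (abs_nonneg a) _)]
          ring
      _ ≤ p * (|t| ^ (p - 2) * |t|) * |t| := by gcongr
      _ = p * (|t| ^ (p - 2) * t ^ 2) := by rw [← sq_abs]; ring
      _ = p * |t| ^ p := by rw [abs_rpow_sub_two_mul_sq (by linarith)]
  linarith [Real.rpow_nonneg (abs_nonneg a) p]

lemma abs_add_rpow_le {p : ℝ} (hp : 2 ≤ p) (a t : ℝ) :
    |a + t| ^ p ≤
      |a| ^ p + p * |a| ^ (p - 2) * a * t + 2 ^ (2 * p) * (|a| ^ (p - 2) * t ^ 2 + |t| ^ p) := by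
  have hp₁ : p ≤ 2 ^ (p - 1) := by linarith [one_add_le_two_rpow (by linarith : 1 ≤ p - 1)]
  have h2p : (2 : ℝ) ^ p = 2 * 2 ^ (p - 1) := by
    rw [Real.rpow_sub_one two_ne_zero]; ring
  have h4p : (2 : ℝ) ^ (2 * p) = (2 ^ p) ^ 2 := by
    rw [mul_comm, Real.rpow_mul zero_le_two, Real.rpow_two]
  have hquad := mul_nonneg (Real.rpow_nonneg (abs_nonneg a) (p - 2)) (sq_nonneg t)
  have htp := Real.rpow_nonneg (abs_nonneg t) p
  rcases le_total |t| |a| with h | h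
  · have hcoeff : p * 2 ^ (p - 1) ≤ 2 ^ (2 * p) := by nlinarith
    linarith [abs_add_rpow_le_of_abs_le hp h, mul_le_mul_of_nonneg_right hcoeff hquad,
      mul_nonneg (Real.rpow_nonneg zero_le_two (2 * p)) htp]
  · have hcoeff : 2 ^ p + p ≤ 2 ^ (2 * p) := by nlinarith
    linarith [abs_add_rpow_le_of_abs_ge hp h, mul_le_mul_of_nonneg_right hcoeff htp,
      mul_nonneg (Real.rpow_nonneg zero_le_two (2 * p)) hquad]

lemma abs_add_mul_rpow_le {p ε : ℝ} (hp : 2 ≤ p) (hε₀ : 0 ≤ ε) (hε₁ : ε ≤ 1) (a d : ℝ) :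
    |a + ε * d| ^ p ≤
      |a| ^ p + ε * (p * |a| ^ (p - 2) * a * d) +
        2 ^ (2 * p) * ε ^ 2 * (|a| ^ (p - 2) * d ^ 2 + |d| ^ p) := by
  have hεp : |ε * d| ^ p ≤ ε ^ 2 * |d| ^ p := by
    rw [abs_mul, abs_of_nonneg hε₀, Real.mul_rpow hε₀ (abs_nonneg d), ← Real.rpow_two]
    exact mul_le_mul_of_nonneg_right (Real.rpow_le_rpow_of_exponent_ge' hε₀ hε₁ zero_le_two hp)
      (Real.rpow_nonneg (abs_nonneg d) p)
  have hbound := abs_add_rpow_le hp a (ε * d)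
  have hscale := mul_le_mul_of_nonneg_left hεp (Real.rpow_nonneg zero_le_two (2 * p))
  linear_combination hbound + hscale

lemma hP_add_smul_le {p ε s : ℝ} {m : ℕ} {r : Fin m → ℝ} (hp : 2 ≤ p) (hr : ∀ i, 0 ≤ r i)
    (hs : 0 ≤ s) (hε₀ : 0 ≤ ε) (hε₁ : ε ≤ 1) (x d : Fin m → ℝ) :
    hP p r s (x + ε • d) ≤
      hP p r s x + ε * ∑ i, gradHP p r s x i * d i +
        2 ^ (2 * p) * ε ^ 2 * hP p (fun i => r i + s * |x i| ^ (p - 2)) s d := by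
  have h4p : 1 ≤ (2 : ℝ) ^ (2 * p) := Real.one_le_rpow one_le_two (by linarith)
  simp only [hP, gradHP, mul_sum, ← sum_add_distrib, Pi.add_apply, Pi.smul_apply, smul_eq_mul]
  refine sum_le_sum fun i _ => ?_
  have hquad := mul_le_mul_of_nonneg_right h4p
    (mul_nonneg (sq_nonneg ε) (mul_nonneg (hr i) (sq_nonneg (d i))))
  have hpow := mul_le_mul_of_nonneg_left (abs_add_mul_rpow_le hp hε₀ hε₁ (x i) (d i)) hs
  linear_combination hquad + hpow

lemma hP_nonneg {p s : ℝ} {m : ℕ} {r : Fin m → ℝ} (hr : ∀ i, 0 ≤ r i) (hs : 0 ≤ s)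
    (x : Fin m → ℝ) : 0 ≤ hP p r s x :=
  sum_nonneg fun i _ => add_nonneg (mul_nonneg (hr i) (sq_nonneg _))
    (mul_nonneg hs (Real.rpow_nonneg (abs_nonneg _) p))

lemma add_mul_objFn_le_objFn_add_smul {p ε s c κ : ℝ} {m : ℕ} {g r : Fin m → ℝ} (hp : 2 ≤ p)
    (hr : ∀ i, 0 ≤ r i) (hs : 0 ≤ s) (hε₀ : 0 ≤ ε) (hε₁ : ε ≤ 1)
    (hc : 2 ^ (2 * p) * ε ^ 2 ≤ c) (hκ : c * κ = ε) (x d : Fin m → ℝ) :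
    objFn p g r s x +
        c * objFn p (fun i => κ * (g i - gradHP p r s x i))
          (fun i => r i + s * |x i| ^ (p - 2)) s d ≤
      objFn p g r s (x + ε • d) := by
  have hweights : ∀ i, 0 ≤ r i + s * |x i| ^ (p - 2) := fun i =>
    add_nonneg (hr i) (mul_nonneg hs (Real.rpow_nonneg (abs_nonneg _) _))
  have hquad := mul_le_mul_of_nonneg_right hc (hP_nonneg (p := p) hweights hs d)
  have hstep := hP_add_smul_le hp hr hs hε₀ hε₁ x d
  have hshift : ∑ i, g i * (x + ε • d) i = ∑ i, g i * x i + ε * ∑ i, g i * d i := by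
    simp only [Pi.add_apply, Pi.smul_apply, smul_eq_mul, mul_add, sum_add_distrib, mul_sum,
      mul_left_comm]
  have hdir : ∑ i, κ * (g i - gradHP p r s x i) * d i =
      κ * (∑ i, g i * d i - ∑ i, gradHP p r s x i * d i) := by
    simp only [mul_sum, sub_mul, mul_sub, sum_sub_distrib, mul_assoc]
  simp only [objFn]
  rw [hshift, hdir]
  linear_combination hstep + hquad + (∑ i, g i * d i - ∑ i, gradHP p r s x i * d i) * hκ

/-- Iterative refinement, progress step: for any `δ` with `Aδ = 0`, the point
`x₁ = x₀ + 2^{-3p} δ` is feasible and `obj₁(x₁) ≥ obj₁(x₀) + 2^{-4p} obj₂(δ)`. -/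
theorem residual_step_progress (p : ℝ) (hp : 2 ≤ p) (k m : ℕ)
    (A : Matrix (Fin k) (Fin m) ℝ) (b : Fin k → ℝ) (g r : Fin m → ℝ)
    (hr : ∀ i, 0 ≤ r i) (s : ℝ) (hs : 0 ≤ s)
    (x₀ : Fin m → ℝ) (hx₀ : A.mulVec x₀ = b)
    (g' r' : Fin m → ℝ)
    (hg' : g' = fun i => 2 ^ p * (g i - gradHP p r s x₀ i))
    (hr' : r' = fun i => r i + s * |x₀ i| ^ (p - 2))
    (δ : Fin m → ℝ) (hδ : A.mulVec δ = 0) :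
    A.mulVec (x₀ + (2 : ℝ) ^ (-(3 * p)) • δ) = b ∧
      objFn p g r s x₀ + 2 ^ (-(4 * p)) * objFn p g' r' s δ ≤
        objFn p g r s (x₀ + (2 : ℝ) ^ (-(3 * p)) • δ) := by
  refine ⟨by rw [Matrix.mulVec_add, Matrix.mulVec_smul, hδ, smul_zero, add_zero, hx₀], ?_⟩
  subst hg' hr'
  have hc : (2 : ℝ) ^ (2 * p) * ((2 : ℝ) ^ (-(3 * p))) ^ 2 = 2 ^ (-(4 * p)) := by
    rw [← Real.rpow_natCast, ← Real.rpow_mul zero_le_two, ← Real.rpow_add two_pos]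
    ring_nf
  have hκ : (2 : ℝ) ^ (-(4 * p)) * 2 ^ p = 2 ^ (-(3 * p)) := by
    rw [← Real.rpow_add two_pos]
    ring_nf
  exact add_mul_objFn_le_objFn_add_smul hp hr hs (Real.rpow_nonneg zero_le_two _)
    (Real.rpow_le_one_of_one_le_of_nonpos one_le_two (by linarith)) hc.le hκ x₀ δ
end

section
/- Let p ≥ 2 be real and let g, r, s > 0 be reals. Define φ(f) = g·f − r·f² − s·f^p for f ≥ 0, and let z = min{ g/(2r), (g/(ps))^{1/(p-1)} }. Then any maximizer f* of φ over [0, ∞) satisfies z/2 ≤ f* ≤ z. -/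
/-!
On `[0, ∞)` the objective `φ(f) = g f − r f² − s f^p` has derivative
`φ'(f) = g − 2 r f − p s f^(p−1)`. The choice of `z` makes each of the two loss terms at most
`g/2` on `(0, z/2)` (using `(z/2)^(p−1) ≤ z^(p−1)/2` for `p ≥ 2`), so `φ` increases on `[0, z/2]`;
beyond `z` one of the two loss terms alone exceeds `g`, so `φ` decreases on `[z, ∞)`.
A maximizer can therefore lie neither below `z/2` nor above `z`.
-/

open Set

section MaximizerLocation

variable {α β : Type*} [LinearOrder α] [Preorder β] {φ : α → β} {s : Set α} {a x : α}

theorem IsMaxOn.le_of_strictMonoOn (hmax : IsMaxOn φ s x) (hx : x ∈ s) (ha : a ∈ s)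
    (hφ : StrictMonoOn φ (s ∩ Iic a)) : a ≤ x := by
  by_contra! hxa
  exact (hφ ⟨hx, hxa.le⟩ ⟨ha, le_rfl⟩ hxa).not_ge (isMaxOn_iff.1 hmax a ha)

theorem IsMaxOn.le_of_strictAntiOn (hmax : IsMaxOn φ s x) (ha : a ∈ s)
    (hφ : StrictAntiOn φ (Ici a)) : x ≤ a := by
  by_contra! hax
  exact (hφ le_rfl hax.le hax).not_ge (isMaxOn_iff.1 hmax a ha)

end MaximizerLocation

namespace Real

theorem rpow_div_two_le {z q : ℝ} (hz : 0 ≤ z) (hq : 1 ≤ q) : (z / 2) ^ q ≤ z ^ q / 2 := by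
  rw [div_rpow hz zero_le_two]
  exact div_le_div_of_nonneg_left (rpow_nonneg hz q) two_pos
    (self_le_rpow_of_one_le one_le_two hq)

end Real

namespace SelfLoop

noncomputable def objective (g r s p f : ℝ) : ℝ := g * f - r * f ^ 2 - s * f ^ p

noncomputable def threshold (g r s p : ℝ) : ℝ :=
  min (g / (2 * r)) ((g / (p * s)) ^ (1 / (p - 1)))

variable {g r s p : ℝ}

theorem hasDerivAt_objective (hp : 1 ≤ p) (x : ℝ) :
    HasDerivAt (objective g r s p) (g - 2 * r * x - p * s * x ^ (p - 1)) x := by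
  have hlin : HasDerivAt (fun f : ℝ => g * f) g x := by
    simpa using (hasDerivAt_id x).const_mul g
  have hsq : HasDerivAt (fun f : ℝ => r * f ^ 2) (2 * r * x) x := by
    simpa [mul_comm, mul_left_comm] using (hasDerivAt_pow 2 x).const_mul r
  have hpow := (Real.hasDerivAt_rpow_const (x := x) (Or.inr hp)).const_mul s
  rw [show p * s * x ^ (p - 1) = s * (p * x ^ (p - 1)) by ring]
  exact (hlin.sub hsq).sub hpow

theorem continuous_objective (hp : 1 ≤ p) : Continuous (objective g r s p) :=
  continuous_iff_continuousAt.2 fun x => (hasDerivAt_objective hp x).continuousAt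

theorem strictMonoOn_objective (hr : 0 < r) (hs : 0 ≤ s) (hp : 2 ≤ p) {z : ℝ}
    (hrz : 2 * r * z ≤ g) (hsz : p * s * z ^ (p - 1) ≤ g) :
    StrictMonoOn (objective g r s p) (Icc 0 (z / 2)) := by
  refine strictMonoOn_of_deriv_pos (convex_Icc _ _)
    (continuous_objective (by linarith)).continuousOn fun x hx => ?_
  rw [interior_Icc] at hx
  obtain ⟨hx0, hxz⟩ := hx
  rw [(hasDerivAt_objective (by linarith) x).deriv]
  have hquad : 2 * r * x < g / 2 := by nlinarith
  have hpow : x ^ (p - 1) ≤ z ^ (p - 1) / 2 :=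
    (Real.rpow_le_rpow hx0.le hxz.le (by linarith)).trans
      (Real.rpow_div_two_le (by linarith) (by linarith))
  have hps : 0 ≤ p * s := by positivity
  linarith [mul_le_mul_of_nonneg_left hpow hps]

theorem strictAntiOn_objective (hr : 0 ≤ r) (hs : 0 ≤ s) (hp : 1 ≤ p) {z : ℝ} (hz : 0 ≤ z)
    (hbeyond : ∀ x, z < x → g < 2 * r * x ∨ g < p * s * x ^ (p - 1)) :
    StrictAntiOn (objective g r s p) (Ici z) := by
  refine strictAntiOn_of_deriv_neg (convex_Ici _)
    (continuous_objective hp).continuousOn fun x hx => ?_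
  rw [interior_Ici] at hx
  rw [(hasDerivAt_objective hp x).deriv]
  have hx0 : 0 ≤ x := hz.trans hx.le
  have hquad : 0 ≤ 2 * r * x := mul_nonneg (mul_nonneg zero_le_two hr) hx0
  have hpow : 0 ≤ p * s * x ^ (p - 1) :=
    mul_nonneg (mul_nonneg (by linarith) hs) (Real.rpow_nonneg hx0 _)
  rcases hbeyond x hx with h | h <;> linarith

theorem threshold_pos (hg : 0 < g) (hr : 0 < r) (hs : 0 < s) (hp : 1 < p) :
    0 < threshold g r s p :=
  lt_min (by positivity) (Real.rpow_pos_of_pos (by positivity) _)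

theorem two_mul_mul_threshold_le (hr : 0 < r) : 2 * r * threshold g r s p ≤ g := by
  have := (le_div_iff₀ (by positivity)).1
    (min_le_left (g / (2 * r)) ((g / (p * s)) ^ (1 / (p - 1))))
  unfold threshold
  linarith

theorem mul_mul_threshold_rpow_le (hg : 0 < g) (hr : 0 < r) (hs : 0 < s) (hp : 1 < p) :
    p * s * threshold g r s p ^ (p - 1) ≤ g := by
  have hle : threshold g r s p ^ (p - 1) ≤ g / (p * s) := by
    rw [← Real.le_rpow_inv_iff_of_pos (threshold_pos hg hr hs hp).le (by positivity)
      (by linarith), ← one_div]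
    exact min_le_right _ _
  have hps : 0 < p * s := by nlinarith
  calc p * s * threshold g r s p ^ (p - 1) ≤ p * s * (g / (p * s)) := by gcongr
    _ = g := mul_div_cancel₀ g hps.ne'

theorem lt_of_threshold_lt (hg : 0 < g) (hr : 0 < r) (hs : 0 < s) (hp : 1 < p) {x : ℝ}
    (hx : threshold g r s p < x) : g < 2 * r * x ∨ g < p * s * x ^ (p - 1) := by
  have hx0 : 0 ≤ x := (threshold_pos hg hr hs hp).le.trans hx.le
  have hps : 0 < p * s := by nlinarith
  rcases min_lt_iff.1 hx with h | h
  · left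
    have := (div_lt_iff₀ (by positivity)).1 h
    linarith
  · right
    rw [one_div, Real.rpow_inv_lt_iff_of_pos (by positivity) hx0 (by linarith),
      div_lt_iff₀ hps] at h
    linarith

end SelfLoop

open SelfLoop in
/-- Scalar self-loop problem, location of the maximizer: for `φ(f) = g f − r f² − s f^p`
on `[0, ∞)` and `z = min{g/(2r), (g/(ps))^{1/(p-1)}}`, any maximizer `f*` of `φ`
over `[0, ∞)` satisfies `z/2 ≤ f* ≤ z`. -/
theorem self_loop_maximizer_location (p : ℝ) (hp : 2 ≤ p)
    (g r s : ℝ) (hg : 0 < g) (hr : 0 < r) (hs : 0 < s)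
    (z : ℝ) (hz : z = min (g / (2 * r)) ((g / (p * s)) ^ (1 / (p - 1))))
    (fstar : ℝ) (hfstar : 0 ≤ fstar)
    (hmax : ∀ f : ℝ, 0 ≤ f →
      g * f - r * f ^ 2 - s * f ^ p ≤ g * fstar - r * fstar ^ 2 - s * fstar ^ p) :
    z / 2 ≤ fstar ∧ fstar ≤ z := by
  have hp1 : 1 < p := by linarith
  have hz_eq : z = threshold g r s p := hz
  have hz0 : 0 < z := hz_eq ▸ threshold_pos hg hr hs hp1
  have hmax' : IsMaxOn (objective g r s p) (Ici 0) fstar := isMaxOn_iff.2 hmax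
  constructor
  · refine hmax'.le_of_strictMonoOn hfstar (show 0 ≤ z / 2 by positivity) ?_
    rw [Ici_inter_Iic, hz_eq]
    exact strictMonoOn_objective hr hs.le hp (two_mul_mul_threshold_le hr)
      (mul_mul_threshold_rpow_le hg hr hs hp1)
  · refine hmax'.le_of_strictAntiOn hz0.le ?_
    rw [hz_eq]
    exact strictAntiOn_objective hr.le hs.le hp1.le (threshold_pos hg hr hs hp1).le
      fun x => lt_of_threshold_lt hg hr hs hp1
end

section
/- Let p ≥ 2 be real, let g, r, s > 0 be reals, define φ(f) = g·f − r·f² − s·f^p for f ≥ 0, and let f* be a maximizer of φ over [0, ∞). Then for any 0 ≤ δ ≤ 1/p and any f ≥ 0 with (1 − δ)f* ≤ f ≤ (1 + δ)f*, one has φ(f*) − φ(f) ≤ 4δ·f*·g. -/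
/-!
At a maximizer `f*` the first-order condition gives `g f* = 2 r f*² + p s f*^p`. Moving `f`
within a factor `1 ± δ` of `f*` changes the linear term by at most `δ g f*`, the quadratic term
by at most `3δ r f*²`, and, since `(1 + δ)^p ≤ exp (p δ) ≤ 1 + 2 p δ` for `p δ ≤ 1`, the `p`-th
power term by at most `2 p δ s f*^p`; by the first-order condition the sum is at most
`δ g f* + 3 δ g f*`.
-/

open Real Set

noncomputable def selfLoopObjective (g r s p x : ℝ) : ℝ :=
  g * x - r * x ^ 2 - s * x ^ p

lemma one_add_rpow_le_one_add_two_mul {x p : ℝ} (hx : 0 ≤ x) (hp : 0 ≤ p) (hpx : p * x ≤ 1) :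
    (1 + x) ^ p ≤ 1 + 2 * (p * x) := by
  have hexp : (1 + x) ^ p ≤ exp (p * x) := by
    rw [mul_comm, exp_mul]
    exact rpow_le_rpow (by linarith) (by linarith [add_one_le_exp x]) hp
  have hpx0 : 0 ≤ p * x := mul_nonneg hp hx
  have hlin := abs_exp_sub_one_le (x := p * x) (by rwa [abs_of_nonneg hpx0])
  rw [abs_of_nonneg hpx0, abs_le] at hlin
  linarith [hlin.2]

/-- The first-order condition, multiplied by `x₀` so that it also holds at the boundary
`x₀ = 0`. -/
lemma selfLoopObjective_balance_of_isMaxOn {g r s p x₀ : ℝ} (hx₀ : 0 ≤ x₀)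
    (hmax : IsMaxOn (selfLoopObjective g r s p) (Ici 0) x₀) :
    g * x₀ = 2 * r * x₀ ^ 2 + p * s * x₀ ^ p := by
  rcases hx₀.eq_or_lt with rfl | hpos
  · rcases eq_or_ne p 0 with rfl | hp <;> simp [*]
  have hderiv := (((hasDerivAt_id' x₀).const_mul g).fun_sub
    ((hasDerivAt_pow 2 x₀).const_mul r)).fun_sub
    ((hasDerivAt_rpow_const (p := p) (Or.inl hpos.ne')).const_mul s)
  have hzero := (hmax.isLocalMax (Ici_mem_nhds hpos)).hasDerivAt_eq_zero hderiv
  rw [rpow_sub_one hpos.ne'] at hzero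
  field_simp at hzero
  linear_combination hzero

/-- Scalar self-loop problem, stability of the value near the maximizer: if `f*`
maximizes `φ(f) = g f − r f² − s f^p` over `[0, ∞)`, then for any `0 ≤ δ ≤ 1/p` and
any `f ≥ 0` with `(1−δ) f* ≤ f ≤ (1+δ) f*`, one has `φ(f*) − φ(f) ≤ 4 δ f* g`. -/
theorem self_loop_value_stability (p : ℝ) (hp : 2 ≤ p)
    (g r s : ℝ) (hg : 0 < g) (hr : 0 < r) (hs : 0 < s)
    (fstar : ℝ) (hfstar : 0 ≤ fstar)
    (hmax : ∀ f : ℝ, 0 ≤ f →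
      g * f - r * f ^ 2 - s * f ^ p ≤ g * fstar - r * fstar ^ 2 - s * fstar ^ p)
    (δ : ℝ) (hδ0 : 0 ≤ δ) (hδp : δ ≤ 1 / p)
    (f : ℝ) (hf0 : 0 ≤ f)
    (hflb : (1 - δ) * fstar ≤ f) (hfub : f ≤ (1 + δ) * fstar) :
    (g * fstar - r * fstar ^ 2 - s * fstar ^ p) -
        (g * f - r * f ^ 2 - s * f ^ p) ≤ 4 * δ * fstar * g := by
  have hbalance := selfLoopObjective_balance_of_isMaxOn hfstar (isMaxOn_iff.mpr hmax)
  have hpδ : p * δ ≤ 1 := by rwa [le_div_iff₀ (by linarith), mul_comm] at hδp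
  have hδ1 : δ ≤ 1 := by nlinarith
  have hlin : g * fstar - g * f ≤ δ * (g * fstar) := by
    linarith [mul_le_mul_of_nonneg_left hflb hg.le]
  have hquad : r * f ^ 2 ≤ (1 + 3 * δ) * (r * fstar ^ 2) := by
    have hsq : (1 + δ) ^ 2 ≤ 1 + 3 * δ := by nlinarith
    calc r * f ^ 2 ≤ r * ((1 + δ) ^ 2 * fstar ^ 2) := by rw [← mul_pow]; gcongr
      _ ≤ r * ((1 + 3 * δ) * fstar ^ 2) := by gcongr
      _ = (1 + 3 * δ) * (r * fstar ^ 2) := by ring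
  have hrpow : s * f ^ p ≤ (1 + 2 * (p * δ)) * (s * fstar ^ p) := by
    have hgrowth := one_add_rpow_le_one_add_two_mul hδ0 (by linarith) hpδ
    calc s * f ^ p ≤ s * ((1 + δ) ^ p * fstar ^ p) := by
          rw [← mul_rpow (by linarith) hfstar]; gcongr
      _ ≤ s * ((1 + 2 * (p * δ)) * fstar ^ p) := by gcongr
      _ = (1 + 2 * (p * δ)) * (s * fstar ^ p) := by ring
  have hA : 0 ≤ δ * (r * fstar ^ 2) := by positivity
  have hB : 0 ≤ p * δ * (s * fstar ^ p) := by have := rpow_nonneg hfstar p; positivity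
  linear_combination hlin + hquad + hrpow - 3 * δ * hbalance + 3 * hA + hB
end

section
/- Let p ≥ 1 be real, let E and T be finite sets, let P : E → (finite subsets of T) assign to each element e ∈ E a set of elements of T (its routing path), let f : E → ℝ, and for each e' ∈ T let K(e') = |{e ∈ E : e' ∈ P(e)}| be the number of paths using e'. Then Σ_{e' ∈ T} | Σ_{e : e' ∈ P(e)} f(e) |^p ≤ Σ_{e ∈ E} |f(e)|^p · Σ_{e' ∈ P(e)} K(e')^{p-1}. -/
open Finset

/-- Congestion bound for rerouting along paths: if each element `e ∈ E` is routed
along a path `P(e) ⊆ T` and `K(e') = |{e : e' ∈ P(e)}|`, then for `p ≥ 1`,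
`Σ_{e' ∈ T} |Σ_{e : e' ∈ P(e)} f(e)|^p ≤ Σ_{e ∈ E} |f(e)|^p · Σ_{e' ∈ P(e)} K(e')^{p-1}`. -/
theorem path_routing_congestion_bound (p : ℝ) (hp : 1 ≤ p)
    (E T : Type*) [Fintype E] [Fintype T] [DecidableEq T]
    (P : E → Finset T) (f : E → ℝ) :
    ∑ e' : T, |∑ e ∈ univ.filter (fun e : E => e' ∈ P e), f e| ^ p ≤
      ∑ e : E, |f e| ^ p *
        ∑ e' ∈ P e, ((univ.filter (fun e'' : E => e' ∈ P e'')).card : ℝ) ^ (p - 1) := by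
  have key : ∀ e' : T,
      |∑ e ∈ univ.filter (fun e : E => e' ∈ P e), f e| ^ p ≤
        ((univ.filter (fun e'' : E => e' ∈ P e'')).card : ℝ) ^ (p - 1) *
          ∑ e ∈ univ.filter (fun e : E => e' ∈ P e), |f e| ^ p := by
    intro e'
    calc |∑ e ∈ univ.filter (fun e : E => e' ∈ P e), f e| ^ p
        ≤ (∑ e ∈ univ.filter (fun e : E => e' ∈ P e), |f e|) ^ p := by
          apply Real.rpow_le_rpow (abs_nonneg _) (Finset.abs_sum_le_sum_abs _ _)
            (le_trans zero_le_one hp)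
      _ ≤ _ := Real.rpow_sum_le_const_mul_sum_rpow _ f hp
  calc ∑ e' : T, |∑ e ∈ univ.filter (fun e : E => e' ∈ P e), f e| ^ p
      ≤ ∑ e' : T, ((univ.filter (fun e'' : E => e' ∈ P e'')).card : ℝ) ^ (p - 1) *
          ∑ e ∈ univ.filter (fun e : E => e' ∈ P e), |f e| ^ p :=
        Finset.sum_le_sum fun e' _ => key e'
    _ = ∑ e' : T, ∑ e ∈ univ.filter (fun e : E => e' ∈ P e),
          ((univ.filter (fun e'' : E => e' ∈ P e'')).card : ℝ) ^ (p - 1) * |f e| ^ p := by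
        simp [Finset.mul_sum]
    _ = ∑ e : E, ∑ e' ∈ P e,
          ((univ.filter (fun e'' : E => e' ∈ P e'')).card : ℝ) ^ (p - 1) * |f e| ^ p := by
        rw [Finset.sum_comm' (s := univ) (t := fun e' => univ.filter (fun e : E => e' ∈ P e))
          (t' := univ) (s' := fun e => P e)]
        intro e' e; simp [and_comm]
    _ = _ := by
        simp only [Finset.mul_sum]
        exact Finset.sum_congr rfl fun e _ => Finset.sum_congr rfl fun e' _ => mul_comm _ _
end

section
/- Let n ≥ 1, let L be a symmetric positive semimidefinite real n × n matrix with L𝟙 = 0 (where 𝟙 is the all-ones vector), let D be a diagonal matrix with strictly positive diagonal entries d_u, and let φ > 0. Suppose that for all x ∈ ℝ^n with xᵀD𝟙 = 0 one has xᵀLx ≥ (φ²/2)·xᵀDx. Then for every b ∈ ℝ^n with bᵀ𝟙 = 0 and every x ∈ ℝ^n with Lx = b, one has bᵀx ≤ 2φ^{-2}·Σ_u b_u²/d_u. -/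
/-!
Shifting `x` by a constant changes neither `L x` (as `L 𝟙 = 0`) nor `bᵀx` (as `b ⊥ 𝟙`), so we may
assume `x ⊥ D𝟙`. The spectral gap then gives `(φ²/2) xᵀDx ≤ xᵀLx = bᵀx`, while Cauchy–Schwarz in
the `D`-weighted inner product gives `(bᵀx)² ≤ ‖b‖²_{D⁻¹} · xᵀDx`; together they bound `bᵀx`.
-/

open Finset Matrix

section

variable {ι : Type*} [Fintype ι]

lemma Matrix.mulVec_sub_const {L : Matrix ι ι ℝ} (hL1 : L *ᵥ (fun _ => 1) = 0)
    (x : ι → ℝ) (c : ℝ) : L *ᵥ (fun u => x u - c) = L *ᵥ x := by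
  have : (fun u => x u - c) = x - c • (fun _ => (1 : ℝ)) := by ext u; simp
  rw [this, mulVec_sub, mulVec_smul, hL1, smul_zero, sub_zero]

lemma Matrix.dotProduct_sub_const {b : ι → ℝ} (hb : ∑ u, b u = 0) (x : ι → ℝ) (c : ℝ) :
    b ⬝ᵥ (fun u => x u - c) = b ⬝ᵥ x := by
  simp only [dotProduct, mul_sub, sum_sub_distrib, ← sum_mul, hb, zero_mul, sub_zero]

noncomputable def weightedCenter (d x : ι → ℝ) : ι → ℝ :=
  fun u => x u - (∑ v, x v * d v) / ∑ v, d v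

lemma sum_weightedCenter_mul {d : ι → ℝ} (hd : ∀ u, 0 < d u) (x : ι → ℝ) :
    ∑ u, weightedCenter d x u * d u = 0 := by
  cases isEmpty_or_nonempty ι
  · simp
  have hsum : ∑ v, d v ≠ 0 := (sum_pos (fun u _ => hd u) univ_nonempty).ne'
  simp only [weightedCenter, sub_mul, sum_sub_distrib, ← mul_sum, div_mul_cancel₀ _ hsum,
    sub_self]

lemma sq_dotProduct_le_mul_weighted {d : ι → ℝ} (hd : ∀ u, 0 < d u) (b y : ι → ℝ) :
    (b ⬝ᵥ y) ^ 2 ≤ (∑ u, b u ^ 2 / d u) * ∑ u, d u * y u ^ 2 :=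
  sum_sq_le_sum_mul_sum_of_sq_le_mul univ
    (fun u _ => div_nonneg (sq_nonneg _) (hd u).le)
    (fun u _ => mul_nonneg (hd u).le (sq_nonneg _))
    (fun u _ => by field_simp [(hd u).ne']; rfl)

lemma dotProduct_le_of_mul_weighted_le {d : ι → ℝ} (hd : ∀ u, 0 < d u) {b y : ι → ℝ}
    {κ : ℝ} (hκ : 0 < κ) (hgap : κ * ∑ u, d u * y u ^ 2 ≤ b ⬝ᵥ y) :
    b ⬝ᵥ y ≤ κ⁻¹ * ∑ u, b u ^ 2 / d u := by
  set E := b ⬝ᵥ y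
  set S := ∑ u, b u ^ 2 / d u
  have hS : 0 ≤ S := sum_nonneg fun u _ => div_nonneg (sq_nonneg _) (hd u).le
  rw [← div_eq_inv_mul, le_div_iff₀' hκ]
  rcases le_or_gt E 0 with hE | hE
  · nlinarith
  refine le_of_mul_le_mul_left ?_ hE
  calc E * (κ * E) = κ * E ^ 2 := by ring
    _ ≤ κ * (S * ∑ u, d u * y u ^ 2) :=
        mul_le_mul_of_nonneg_left (sq_dotProduct_le_mul_weighted hd b y) hκ.le
    _ = S * (κ * ∑ u, d u * y u ^ 2) := by ring
    _ ≤ E * S := by rw [mul_comm E]; exact mul_le_mul_of_nonneg_left hgap hS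

end

theorem electrical_energy_bound_general (n : ℕ)
    (L : Matrix (Fin n) (Fin n) ℝ)
    (hL1 : L.mulVec (fun _ => (1 : ℝ)) = 0)
    (d : Fin n → ℝ) (hd : ∀ u, 0 < d u)
    (φ : ℝ) (hφ : 0 < φ)
    (hgap : ∀ x : Fin n → ℝ, (∑ u, x u * d u) = 0 →
      φ ^ 2 / 2 * ∑ u, d u * x u ^ 2 ≤ x ⬝ᵥ L.mulVec x) :
    ∀ b : Fin n → ℝ, (∑ u, b u) = 0 →
      ∀ x : Fin n → ℝ, L.mulVec x = b →
        b ⬝ᵥ x ≤ 2 / φ ^ 2 * ∑ u, b u ^ 2 / d u := by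
  intro b hb x hLx
  set y := weightedCenter d x
  have hLy : L *ᵥ y = b := (mulVec_sub_const hL1 x _).trans hLx
  have hby : b ⬝ᵥ y = b ⬝ᵥ x := dotProduct_sub_const hb x _
  have hgap_y := hgap y (sum_weightedCenter_mul hd x)
  rw [hLy, dotProduct_comm] at hgap_y
  rw [← hby, ← inv_div]
  exact dotProduct_le_of_mul_weighted_le hd (by positivity) hgap_y

/-- Electrical-energy bound from a spectral gap (Cheeger-type hypothesis): if `L` is
symmetric PSD with `L𝟙 = 0` and `xᵀLx ≥ (φ²/2) xᵀDx` for all `x` with `xᵀD𝟙 = 0`,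
then for every demand `b ⊥ 𝟙` and every `x` with `Lx = b`, the electrical energy
satisfies `bᵀx ≤ 2 φ⁻² Σ_u b_u²/d_u`. -/
theorem electrical_energy_bound (n : ℕ) (hn : 1 ≤ n)
    (L : Matrix (Fin n) (Fin n) ℝ) (hL : L.PosSemidef)
    (hL1 : L.mulVec (fun _ => (1 : ℝ)) = 0)
    (d : Fin n → ℝ) (hd : ∀ u, 0 < d u)
    (φ : ℝ) (hφ : 0 < φ)
    (hgap : ∀ x : Fin n → ℝ, (∑ u, x u * d u) = 0 →
      φ ^ 2 / 2 * ∑ u, d u * x u ^ 2 ≤ x ⬝ᵥ L.mulVec x) :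
    ∀ b : Fin n → ℝ, (∑ u, b u) = 0 →
      ∀ x : Fin n → ℝ, L.mulVec x = b →
        b ⬝ᵥ x ≤ 2 / φ ^ 2 * ∑ u, b u ^ 2 / d u :=
  electrical_energy_bound_general n L hL1 d hd φ hφ hgap
end

section
/- Let p ≥ 2 be real, let B ∈ ℝ^{m × n} be the edge-vertex incidence matrix of a graph with m edges and vertex degrees d_u ≥ 1 (each row of B has one entry +1 and one entry −1, and d_u is the number of rows with a nonzero entry in column u), let r, s ≥ 0 be reals, and let ĝ ∈ ℝ^m be a nonzero vector with Bᵀĝ = 0. Suppose f ∈ ℝ^m satisfies Bᵀf = b and ĝᵀf = θ. Then Σ_e (r f_e² + s|f_e|^p) ≥ (1/4)·[ (r/2)·Σ_u b_u²/d_u + r·θ²/‖ĝ‖₂² + s·max_u (|b_u|/d_u)^p + s·(|θ|/‖ĝ‖₁)^p ]. -/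
open Finset Matrix

/-- Lower bound on the smoothed `p`-norm energy of any flow: on a unit-weight graph
with incidence matrix `B` and degrees `d_u ≥ 1`, any flow `f` with residues
`b = Bᵀf` and dot product `θ` with a nonzero circulation `ĝ` (i.e. `Bᵀĝ = 0`)
satisfies
`Σ_e (r f_e² + s|f_e|^p) ≥ (1/4)[(r/2)Σ_u b_u²/d_u + rθ²/‖ĝ‖₂²
  + s·max_u(|b_u|/d_u)^p + s·(|θ|/‖ĝ‖₁)^p]`. -/
theorem smoothed_p_norm_flow_lower_bound (p : ℝ) (hp : 2 ≤ p)
    (V E : Type*) [Fintype V] [Fintype E] [DecidableEq V] [Nonempty V]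
    (B : Matrix E V ℝ)
    (hB : ∀ e : E, ∃ u v : V, u ≠ v ∧ B e u = 1 ∧ B e v = -1 ∧
      ∀ w : V, w ≠ u → w ≠ v → B e w = 0)
    (d : V → ℕ)
    (hd : ∀ u : V, d u = (univ.filter (fun e : E => B e u ≠ 0)).card)
    (hd1 : ∀ u : V, 1 ≤ d u)
    (r s : ℝ) (hr : 0 ≤ r) (hs : 0 ≤ s)
    (ghat : E → ℝ) (hg0 : ghat ≠ 0) (hgc : Bᵀ.mulVec ghat = 0)
    (f : E → ℝ) (b : V → ℝ) (θ : ℝ)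
    (hfb : Bᵀ.mulVec f = b) (hfθ : (∑ e, ghat e * f e) = θ) :
    1 / 4 * (r / 2 * (∑ u, b u ^ 2 / (d u : ℝ))
        + r * θ ^ 2 / (∑ e, ghat e ^ 2)
        + s * (univ.sup' univ_nonempty (fun u : V => |b u| / (d u : ℝ))) ^ p
        + s * (|θ| / ∑ e, |ghat e|) ^ p) ≤
      ∑ e, (r * f e ^ 2 + s * |f e| ^ p) := by
  classical
  have hp0 : (0:ℝ) < p := by linarith
  obtain ⟨e0, he0⟩ : ∃ e, ghat e ≠ 0 := by
    by_contra h
    push_neg at h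
    exact hg0 (funext fun e => h e)
  have hEne : (univ : Finset E).Nonempty := ⟨e0, mem_univ e0⟩
  set A := ∑ e, f e ^ 2 with hAdef
  set P := ∑ e, |f e| ^ p with hPdef
  have hA0 : 0 ≤ A := Finset.sum_nonneg fun e _ => sq_nonneg _
  have hP0 : 0 ≤ P := Finset.sum_nonneg fun e _ => Real.rpow_nonneg (abs_nonneg _) _
  have hB1 : ∀ e u, |B e u| ≤ 1 := by
    intro e u
    obtain ⟨x, y, hxy, hx, hy, hz⟩ := hB e
    rcases eq_or_ne u x with rfl | hux
    · simp [hx]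
    rcases eq_or_ne u y with rfl | huy
    · simp [hy]
    · simp [hz u hux huy]
  have hbu : ∀ u, b u = ∑ e, B e u * f e := by
    intro u; rw [← hfb]; simp [Matrix.mulVec, dotProduct, Matrix.transpose_apply]
  have hdpos : ∀ u, (0:ℝ) < (d u : ℝ) := fun u => by exact_mod_cast (hd1 u)
  -- restricted sum expression for b u
  have hbu' : ∀ u, b u = ∑ e ∈ univ.filter (fun e => B e u ≠ 0), B e u * f e := by
    intro u
    rw [hbu u]
    refine (Finset.sum_subset (Finset.filter_subset _ _) ?_).symm
    intro e _ he
    simp only [mem_filter, mem_univ, true_and, not_not] at he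
    simp [he]
  -- the max |f| over all edges, bound for P
  have hMP : ∀ e : E, |f e| ^ p ≤ P :=
    fun e => Finset.single_le_sum (f := fun e => |f e| ^ p)
      (fun e _ => Real.rpow_nonneg (abs_nonneg _) _) (mem_univ e)
  -- number of nonzero entries in each row is 2
  have hcard2 : ∀ e : E, (univ.filter fun u => B e u ≠ 0).card = 2 := by
    intro e
    obtain ⟨x, y, hxy, hx, hy, hz⟩ := hB e
    have hset : (univ.filter fun u => B e u ≠ 0) = {x, y} := by
      ext u
      simp only [mem_filter, mem_univ, true_and, mem_insert, mem_singleton]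
      constructor
      · intro h
        by_contra hc
        push_neg at hc
        exact h (hz u hc.1 hc.2)
      · rintro (rfl | rfl)
        · simp [hx]
        · simp [hy]
    rw [hset, card_insert_of_notMem (by simp [hxy]), card_singleton]
  -- T1
  have T1 : (∑ u, b u ^ 2 / (d u : ℝ)) ≤ 2 * A := by
    have h1 : ∀ u, b u ^ 2 / (d u : ℝ) ≤ ∑ e ∈ univ.filter (fun e => B e u ≠ 0), f e ^ 2 := by
      intro u
      rw [div_le_iff₀ (hdpos u)]
      have hcs := Finset.sum_mul_sq_le_sq_mul_sq (univ.filter (fun e => B e u ≠ 0))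
        (fun e => B e u) f
      have hsq : (∑ e ∈ univ.filter (fun e => B e u ≠ 0), B e u ^ 2) ≤ (d u : ℝ) := by
        rw [hd u]
        calc (∑ e ∈ univ.filter (fun e => B e u ≠ 0), B e u ^ 2)
            ≤ ∑ e ∈ univ.filter (fun e => B e u ≠ 0), 1 := by
              apply Finset.sum_le_sum
              intro e _
              have := hB1 e u
              nlinarith [abs_nonneg (B e u), sq_abs (B e u)]
          _ = ((univ.filter (fun e : E => B e u ≠ 0)).card : ℝ) := by simp
      have hfs : 0 ≤ ∑ e ∈ univ.filter (fun e => B e u ≠ 0), f e ^ 2 :=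
        Finset.sum_nonneg fun e _ => sq_nonneg _
      calc b u ^ 2 = (∑ e ∈ univ.filter (fun e => B e u ≠ 0), B e u * f e) ^ 2 := by
            rw [← hbu' u]
        _ ≤ (∑ e ∈ univ.filter (fun e => B e u ≠ 0), B e u ^ 2)
              * ∑ e ∈ univ.filter (fun e => B e u ≠ 0), f e ^ 2 := hcs
        _ ≤ (d u : ℝ) * ∑ e ∈ univ.filter (fun e => B e u ≠ 0), f e ^ 2 :=
            mul_le_mul_of_nonneg_right hsq hfs
        _ = (∑ e ∈ univ.filter (fun e => B e u ≠ 0), f e ^ 2) * (d u : ℝ) := mul_comm _ _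
    calc (∑ u, b u ^ 2 / (d u : ℝ))
        ≤ ∑ u, ∑ e ∈ univ.filter (fun e => B e u ≠ 0), f e ^ 2 :=
          Finset.sum_le_sum fun u _ => h1 u
      _ = ∑ u : V, ∑ e : E, if B e u ≠ 0 then f e ^ 2 else 0 := by
          refine Finset.sum_congr rfl fun u _ => ?_
          rw [Finset.sum_filter]
      _ = ∑ e : E, ∑ u : V, if B e u ≠ 0 then f e ^ 2 else 0 := Finset.sum_comm
      _ = 2 * A := by
          rw [hAdef, Finset.mul_sum]
          refine Finset.sum_congr rfl fun e _ => ?_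
          rw [← Finset.sum_filter, Finset.sum_const, hcard2 e]
          simp [mul_comm]
  -- T2
  have hg2pos : 0 < ∑ e, ghat e ^ 2 :=
    Finset.sum_pos' (fun e _ => sq_nonneg _) ⟨e0, mem_univ _, by positivity⟩
  have hg1pos : 0 < ∑ e, |ghat e| :=
    Finset.sum_pos' (fun e _ => abs_nonneg _) ⟨e0, mem_univ _, abs_pos.2 he0⟩
  have T2 : r * θ ^ 2 / (∑ e, ghat e ^ 2) ≤ r * A := by
    rw [div_le_iff₀ hg2pos]
    calc r * θ ^ 2 = r * (∑ e, ghat e * f e) ^ 2 := by rw [hfθ]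
      _ ≤ r * ((∑ e, ghat e ^ 2) * ∑ e, f e ^ 2) :=
          mul_le_mul_of_nonneg_left (Finset.sum_mul_sq_le_sq_mul_sq univ ghat f) hr
      _ = r * A * ∑ e, ghat e ^ 2 := by rw [hAdef]; ring
  -- per-vertex bound for T3
  have T3u : ∀ u : V, (|b u| / (d u : ℝ)) ^ p ≤ P := by
    intro u
    have hSne : (univ.filter (fun e : E => B e u ≠ 0)).Nonempty := by
      rw [← Finset.card_pos, ← hd u]; exact hd1 u
    set S := univ.filter (fun e : E => B e u ≠ 0) with hS
    set M := S.sup' hSne (fun e => |f e|) with hM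
    obtain ⟨e1, he1, hMe1⟩ := Finset.exists_mem_eq_sup' hSne (fun e => |f e|)
    have hM0 : 0 ≤ M := by rw [hM, hMe1]; exact abs_nonneg _
    have hbM : |b u| ≤ (d u : ℝ) * M := by
      calc |b u| = |∑ e ∈ S, B e u * f e| := by rw [hbu' u]
        _ ≤ ∑ e ∈ S, |B e u * f e| := Finset.abs_sum_le_sum_abs _ _
        _ ≤ ∑ e ∈ S, M := by
            apply Finset.sum_le_sum
            intro e he
            rw [abs_mul]
            calc |B e u| * |f e| ≤ 1 * |f e| :=
                mul_le_mul_of_nonneg_right (hB1 e u) (abs_nonneg _)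
              _ = |f e| := one_mul _
              _ ≤ M := Finset.le_sup' (fun e => |f e|) he
        _ = (S.card : ℝ) * M := by rw [Finset.sum_const, nsmul_eq_mul]
        _ = (d u : ℝ) * M := by rw [hd u]
    have hdiv : |b u| / (d u : ℝ) ≤ M := by
      rw [div_le_iff₀ (hdpos u)]; rw [mul_comm] at hbM; exact hbM
    calc (|b u| / (d u : ℝ)) ^ p ≤ M ^ p :=
        Real.rpow_le_rpow (by positivity) hdiv hp0.le
      _ = |f e1| ^ p := by rw [hM, hMe1]
      _ ≤ P := hMP e1
  have T3 : (univ.sup' univ_nonempty (fun u : V => |b u| / (d u : ℝ))) ^ p ≤ P := by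
    obtain ⟨u1, _, hu1⟩ := Finset.exists_mem_eq_sup' (univ_nonempty (α := V))
      (fun u : V => |b u| / (d u : ℝ))
    rw [hu1]
    exact T3u u1
  -- T4
  have T4 : (|θ| / ∑ e, |ghat e|) ^ p ≤ P := by
    set M := (univ : Finset E).sup' hEne (fun e => |f e|) with hM
    obtain ⟨e1, _, hMe1⟩ := Finset.exists_mem_eq_sup' hEne (fun e => |f e|)
    have hθM : |θ| ≤ (∑ e, |ghat e|) * M := by
      calc |θ| = |∑ e, ghat e * f e| := by rw [hfθ]
        _ ≤ ∑ e, |ghat e * f e| := Finset.abs_sum_le_sum_abs _ _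
        _ ≤ ∑ e, |ghat e| * M := by
            apply Finset.sum_le_sum
            intro e he
            rw [abs_mul]
            exact mul_le_mul_of_nonneg_left (Finset.le_sup' (fun e => |f e|) he) (abs_nonneg _)
        _ = (∑ e, |ghat e|) * M := by rw [← Finset.sum_mul]
    have hdiv : |θ| / (∑ e, |ghat e|) ≤ M := by
      rw [div_le_iff₀ hg1pos]; rw [mul_comm] at hθM; exact hθM
    calc (|θ| / ∑ e, |ghat e|) ^ p ≤ M ^ p :=
        Real.rpow_le_rpow (by positivity) hdiv hp0.le
      _ = |f e1| ^ p := by rw [hM, hMe1]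
      _ ≤ P := hMP e1
  -- combine
  have hsum : ∑ e, (r * f e ^ 2 + s * |f e| ^ p) = r * A + s * P := by
    rw [hAdef, hPdef, Finset.sum_add_distrib, Finset.mul_sum, Finset.mul_sum]
  rw [hsum]
  have h1 : r / 2 * (∑ u, b u ^ 2 / (d u : ℝ)) ≤ r * A := by
    have := mul_le_mul_of_nonneg_left T1 (by linarith : (0:ℝ) ≤ r / 2)
    linarith
  have h3 : s * (univ.sup' univ_nonempty (fun u : V => |b u| / (d u : ℝ))) ^ p ≤ s * P :=
    mul_le_mul_of_nonneg_left T3 hs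
  have h4 : s * (|θ| / ∑ e, |ghat e|) ^ p ≤ s * P :=
    mul_le_mul_of_nonneg_left T4 hs
  have hrA : 0 ≤ r * A := mul_nonneg hr hA0
  have hsP : 0 ≤ s * P := mul_nonneg hs hP0
  linarith
end

section
/- Let G and H be finite simple graphs on the same vertex set V, with Laplacian matrices L_G and L_H, such that G has minimum degree at least 1 and conductance at least φ > 0. Suppose there is τ > 0 such that for every x ∈ ℝ^V: 0.9·τ·xᵀL_G x ≤ xᵀL_H x ≤ 1.1·τ·xᵀL_G x. Then H has conductance at least 0.8·φ. -/
open Finset Matrix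

/-- The number of edges of `G` crossing the cut `(S, Sᶜ)`. -/
def cutSize {V : Type*} [Fintype V] [DecidableEq V]
    (G : SimpleGraph V) [DecidableRel G.Adj] (S : Finset V) : ℕ :=
  ((S ×ˢ Sᶜ).filter fun q => G.Adj q.1 q.2).card

/-- The volume of a vertex set `S`: the sum of the degrees of its vertices. -/
def volume {V : Type*} [Fintype V] [DecidableEq V]
    (G : SimpleGraph V) [DecidableRel G.Adj] (S : Finset V) : ℕ :=
  ∑ v ∈ S, G.degree v

lemma quad_eq_cut {V : Type*} [Fintype V] [DecidableEq V]
    (G : SimpleGraph V) [DecidableRel G.Adj] (S : Finset V) :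
    (fun v => if v ∈ S then (1:ℝ) else 0) ⬝ᵥ
      (G.lapMatrix ℝ).mulVec (fun v => if v ∈ S then (1:ℝ) else 0) = cutSize G S := by
  rw [← Matrix.toLinearMap₂'_apply', SimpleGraph.lapMatrix_toLinearMap₂']
  have key : ∀ i j : V,
      (if G.Adj i j then ((if i ∈ S then (1:ℝ) else 0) - (if j ∈ S then (1:ℝ) else 0))^2 else 0)
        = (if (i ∈ S ∧ j ∉ S) ∧ G.Adj i j then (1:ℝ) else 0)
          + (if (j ∈ S ∧ i ∉ S) ∧ G.Adj i j then (1:ℝ) else 0) := by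
    intro i j
    by_cases hA : G.Adj i j <;> by_cases hi : i ∈ S <;> by_cases hj : j ∈ S <;>
      simp [hA, hi, hj]
  simp_rw [key, Finset.sum_add_distrib]
  have h1 : ∀ (P : V → V → Prop) [DecidablePred fun q : V × V => P q.1 q.2]
      [∀ i j, Decidable (P i j)],
      (∑ i : V, ∑ j : V, if P i j then (1:ℝ) else 0)
        = ((univ ×ˢ univ).filter fun q : V × V => P q.1 q.2).card := by
    intro P _ _
    rw [← Finset.sum_product']
    exact Finset.sum_boole _ _
  have e1 : (∑ i : V, ∑ j : V, if (i ∈ S ∧ j ∉ S) ∧ G.Adj i j then (1:ℝ) else 0)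
      = cutSize G S := by
    rw [h1]
    congr 1
    unfold cutSize
    congr 1
    ext ⟨a, b⟩
    simp [and_assoc]
  have e2 : (∑ i : V, ∑ j : V, if (j ∈ S ∧ i ∉ S) ∧ G.Adj i j then (1:ℝ) else 0)
      = cutSize G S := by
    rw [Finset.sum_comm]
    have hsw : ∀ i j : V, (if (i ∈ S ∧ j ∉ S) ∧ G.Adj j i then (1:ℝ) else 0)
        = (if (i ∈ S ∧ j ∉ S) ∧ G.Adj i j then (1:ℝ) else 0) := by
      intro i j; exact if_congr (and_congr Iff.rfl (G.adj_comm j i)) rfl rfl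
    simp_rw [hsw]
    exact e1
  rw [e1, e2]
  ring

lemma cut_singleton {V : Type*} [Fintype V] [DecidableEq V]
    (G : SimpleGraph V) [DecidableRel G.Adj] (v : V) :
    cutSize G {v} = G.degree v := by
  unfold cutSize
  have hs : (Finset.filter (fun q : V × V => G.Adj q.1 q.2) (({v} : Finset V) ×ˢ {v}ᶜ))
      = ({v} : Finset V) ×ˢ G.neighborFinset v := by
    ext ⟨a, b⟩
    simp only [Finset.mem_filter, Finset.mem_product, Finset.mem_singleton, Finset.mem_compl,
      SimpleGraph.mem_neighborFinset]
    constructor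
    · rintro ⟨⟨ha, _⟩, hadj⟩; exact ⟨ha, ha ▸ hadj⟩
    · rintro ⟨ha, hadj⟩; subst ha; exact ⟨⟨rfl, fun hb => G.ne_of_adj hadj hb.symm⟩, hadj⟩
  rw [hs, Finset.card_product, Finset.card_singleton, one_mul,
    SimpleGraph.card_neighborFinset_eq_degree]

/-- Conductance is approximately preserved under spectral approximation of
Laplacians: if `G` has minimum degree at least `1` and conductance at least `φ`, and
`0.9 τ xᵀL_G x ≤ xᵀL_H x ≤ 1.1 τ xᵀL_G x` for all `x`, then `H` has conductance at
least `0.8 φ`. -/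
theorem conductance_of_spectral_approx (V : Type*) [Fintype V] [DecidableEq V]
    (G H : SimpleGraph V) [DecidableRel G.Adj] [DecidableRel H.Adj]
    (φ τ : ℝ) (hφ : 0 < φ) (hτ : 0 < τ)
    (hdeg : ∀ v : V, 1 ≤ G.degree v)
    (hcond : ∀ S : Finset V, S.Nonempty → S ≠ univ →
      φ ≤ (cutSize G S : ℝ) / min (volume G S : ℝ) (volume G Sᶜ : ℝ))
    (happrox : ∀ x : V → ℝ,
      0.9 * τ * (x ⬝ᵥ (G.lapMatrix ℝ).mulVec x) ≤ x ⬝ᵥ (H.lapMatrix ℝ).mulVec x ∧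
        x ⬝ᵥ (H.lapMatrix ℝ).mulVec x ≤ 1.1 * τ * (x ⬝ᵥ (G.lapMatrix ℝ).mulVec x)) :
    ∀ S : Finset V, S.Nonempty → S ≠ univ →
      0.8 * φ ≤ (cutSize H S : ℝ) / min (volume H S : ℝ) (volume H Sᶜ : ℝ) := by
  intro S hS hSu
  have hcut := happrox (fun v => if v ∈ S then (1:ℝ) else 0)
  rw [quad_eq_cut G S, quad_eq_cut H S] at hcut
  have hdegb : ∀ v : V, 0.9 * τ * (G.degree v : ℝ) ≤ (H.degree v : ℝ) ∧
      (H.degree v : ℝ) ≤ 1.1 * τ * (G.degree v : ℝ) := by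
    intro v
    have h := happrox (fun u => if u ∈ ({v} : Finset V) then (1:ℝ) else 0)
    rwa [quad_eq_cut G {v}, quad_eq_cut H {v}, cut_singleton, cut_singleton] at h
  have hvol : ∀ T : Finset V, 0.9 * τ * (volume G T : ℝ) ≤ (volume H T : ℝ) ∧
      (volume H T : ℝ) ≤ 1.1 * τ * (volume G T : ℝ) := by
    intro T
    unfold volume
    push_cast
    constructor
    · rw [Finset.mul_sum]; exact Finset.sum_le_sum fun v _ => (hdegb v).1
    · rw [Finset.mul_sum]; exact Finset.sum_le_sum fun v _ => (hdegb v).2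
  have hvolG : ∀ T : Finset V, T.Nonempty → (1:ℝ) ≤ (volume G T : ℝ) := by
    intro T hT
    have h1 : 1 ≤ volume G T := by
      calc 1 ≤ T.card := hT.card_pos
        _ = ∑ _v ∈ T, 1 := by simp
        _ ≤ ∑ v ∈ T, G.degree v := Finset.sum_le_sum fun v _ => hdeg v
    exact_mod_cast h1
  have hScn : Sᶜ.Nonempty := Finset.nonempty_iff_ne_empty.mpr fun h => hSu ((Finset.compl_eq_empty_iff S).mp h)
  have hmG : 0 < min (volume G S : ℝ) (volume G Sᶜ : ℝ) :=
    lt_min (lt_of_lt_of_le one_pos (hvolG S hS)) (lt_of_lt_of_le one_pos (hvolG Sᶜ hScn))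
  have hmH : 0 < min (volume H S : ℝ) (volume H Sᶜ : ℝ) := by
    apply lt_min
    · calc (0:ℝ) < 0.9 * τ * (volume G S : ℝ) := by nlinarith [hvolG S hS]
        _ ≤ _ := (hvol S).1
    · calc (0:ℝ) < 0.9 * τ * (volume G Sᶜ : ℝ) := by nlinarith [hvolG Sᶜ hScn]
        _ ≤ _ := (hvol Sᶜ).1
  have hmle : min (volume H S : ℝ) (volume H Sᶜ : ℝ)
      ≤ 1.1 * τ * min (volume G S : ℝ) (volume G Sᶜ : ℝ) := by
    rcases le_total (volume G S : ℝ) (volume G Sᶜ : ℝ) with h | h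
    · rw [min_eq_left h]; exact le_trans (min_le_left _ _) (hvol S).2
    · rw [min_eq_right h]; exact le_trans (min_le_right _ _) (hvol Sᶜ).2
  have hφm : φ * min (volume G S : ℝ) (volume G Sᶜ : ℝ) ≤ (cutSize G S : ℝ) :=
    (le_div_iff₀ hmG).mp (hcond S hS hSu)
  rw [le_div_iff₀ hmH]
  have hcG0 : (0:ℝ) ≤ (cutSize G S : ℝ) := Nat.cast_nonneg _
  nlinarith [hcut.1, mul_le_mul_of_nonneg_left hmle (by positivity : (0:ℝ) ≤ 0.8 * φ),
    mul_le_mul_of_nonneg_left hφm hτ.le, mul_nonneg hτ.le hcG0]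
end
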